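/- arXiv:0909.2622 — 8 statements merged into one kernel-verified Lean document; each statement's English description precedes it below -/
import Mathlib

section
/- Let P > 0 and σ² > 0, let H_R ∈ ℂ^{n_R×n_T} and H_E ∈ ℂ^{n_E×n_T}, and assume H_R†H_R − H_E†H_E ≠ 0. Then sup over all n_T×n_T Hermitian positive semidefinite matrices R_x with Tr(R_x) ≤ P of [log det(I + H_R R_x H_R†/σ²) − log det(I + H_E R_x H_E†/σ²)] is strictly positive if and only if the Hermitian matrix H_R†H_R − H_E†H_E has a positive eigenvalue (equivalently, it is positive semidefinite or indefinite, i.e., not negative semidefinite). -/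
open Matrix
open scoped ComplexOrder MatrixOrder

/-!
Write `A = H_R† H_R − H_E† H_E`. If `A v = t v` with `t > 0`, beamforming along `v`, i.e.
`R_x = P v v† / ‖v‖²`, gives the rate `log (1 + s ‖H_R v‖²) − log (1 + s ‖H_E v‖²)`, which is
positive because `‖H_R v‖² − ‖H_E v‖² = t ‖v‖²`. Otherwise `H_R† H_R ≤ H_E† H_E` in the Loewner
order. Writing `R_x = B† B`, Sylvester's identity turns `det (1 + H R_x H†)` into
`det (1 + B H† H B†)`, and `det` is monotone on positive definite matrices, so every rate is
`≤ 0`. The set of rates is bounded above because `R_x ≤ Tr(R_x) • 1 ≤ P • 1`.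
-/

namespace Matrix

variable {𝕜 : Type*} [RCLike 𝕜] {k m n : Type*} [Fintype k] [Fintype m] [Fintype n]

theorem PosSemidef.exists_eq_conjTranspose_mul_self [DecidableEq n] {A : Matrix n n 𝕜}
    (hA : A.PosSemidef) : ∃ B : Matrix n n 𝕜, A = Bᴴ * B :=
  ⟨CFC.sqrt A, by
    rw [(nonneg_iff_posSemidef.mp (CFC.sqrt_nonneg A)).1.eq, CFC.sqrt_mul_sqrt_self A hA.nonneg]⟩

theorem mul_mul_conjTranspose_le_mul_mul_conjTranspose {A B : Matrix n n 𝕜} (h : A ≤ B)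
    (C : Matrix m n 𝕜) : C * A * Cᴴ ≤ C * B * Cᴴ := by
  rw [le_iff, ← Matrix.sub_mul, ← Matrix.mul_sub]
  exact h.mul_mul_conjTranspose_same C

theorem PosSemidef.le_smul_one_of_re_trace_le [DecidableEq n] {A : Matrix n n 𝕜}
    (hA : A.PosSemidef) {c : ℝ} (hc : RCLike.re A.trace ≤ c) : A ≤ c • (1 : Matrix n n 𝕜) := by
  rw [← Algebra.algebraMap_eq_smul_one]
  refine le_algebraMap_of_spectrum_le (fun x hx => ?_) hA.1.isSelfAdjoint
  obtain ⟨i, rfl⟩ := hA.1.spectrum_real_eq_range_eigenvalues ▸ hx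
  refine le_trans ?_ hc
  rw [hA.1.trace_eq_sum_eigenvalues, ← RCLike.ofReal_sum, RCLike.ofReal_re]
  exact Finset.single_le_sum (fun j _ => hA.eigenvalues_nonneg j) (Finset.mem_univ i)

theorem IsHermitian.exists_pos_eigenvector_of_not_nonpos [DecidableEq n] {A : Matrix n n 𝕜}
    (hA : A.IsHermitian) (h : ¬A ≤ 0) :
    ∃ (t : ℝ) (v : n → 𝕜), 0 < t ∧ v ≠ 0 ∧ A *ᵥ v = (t : 𝕜) • v := by
  rw [le_iff, zero_sub, hA.neg.posSemidef_iff_eigenvalues_nonneg] at h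
  simp only [Pi.le_def, Pi.zero_apply, not_forall, not_le] at h
  obtain ⟨i, hi⟩ := h
  refine ⟨-hA.neg.eigenvalues i, hA.neg.eigenvectorBasis i, by linarith, ?_, ?_⟩
  · exact fun h0 => hA.neg.eigenvectorBasis.orthonormal.ne_zero i ((WithLp.ofLp_eq_zero 2).mp h0)
  · rw [RCLike.ofReal_neg, neg_smul, ← RCLike.real_smul_eq_coe_smul,
      ← hA.neg.mulVec_eigenvectorBasis, neg_mulVec, neg_neg]

theorem PosSemidef.one_le_det_one_add [DecidableEq n] {A : Matrix n n 𝕜} (hA : A.PosSemidef) :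
    1 ≤ (1 + A).det := by
  have hH : (1 + A).IsHermitian := isHermitian_one.add hA.1
  have hμ (i : n) : 1 ≤ hH.eigenvalues i := by
    have hi : hH.eigenvalues i - 1 + 1 ∈ spectrum ℝ (algebraMap ℝ (Matrix n n 𝕜) 1 + A) := by
      simpa using hH.eigenvalues_mem_spectrum_real i
    rw [spectrum.add_mem_add_iff] at hi
    linarith [spectrum_nonneg_of_nonneg hA.nonneg hi]
  rw [hH.det_eq_prod_eigenvalues, ← RCLike.ofReal_prod, ← RCLike.ofReal_one,
    RCLike.ofReal_le_ofReal]
  exact Finset.one_le_prod fun i _ => hμ i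

theorem PosDef.det_le_det [DecidableEq n] {A B : Matrix n n 𝕜} (hA : A.PosDef) (h : A ≤ B) :
    A.det ≤ B.det := by
  obtain ⟨C, hC⟩ := h.exists_eq_conjTranspose_mul_self
  calc A.det = A.det * 1 := (mul_one _).symm
    _ ≤ A.det * (1 + C * A⁻¹ * Cᴴ).det :=
      mul_le_mul_of_nonneg_left (hA.inv.posSemidef.mul_mul_conjTranspose_same C).one_le_det_one_add
        hA.det_pos.le
    _ = B.det := by
      rw [← det_add_mul _ _ ((isUnit_iff_isUnit_det A).1 hA.isUnit), ← hC, add_sub_cancel]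

theorem det_one_add_mul_mul_conjTranspose_le_of_le [DecidableEq m] {Q Q' : Matrix n n 𝕜}
    (hQ : Q.PosSemidef) (h : Q ≤ Q') (G : Matrix m n 𝕜) :
    (1 + G * Q * Gᴴ).det ≤ (1 + G * Q' * Gᴴ).det :=
  (PosDef.one.add_posSemidef (hQ.mul_mul_conjTranspose_same G)).det_le_det
    (add_le_add_right (mul_mul_conjTranspose_le_mul_mul_conjTranspose h G) 1)

theorem det_one_add_mul_conjTranspose_mul_self_mul_conjTranspose [DecidableEq m] [DecidableEq n]
    (G : Matrix m n 𝕜) (B : Matrix n n 𝕜) :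
    (1 + G * (Bᴴ * B) * Gᴴ).det = (1 + B * (Gᴴ * G) * Bᴴ).det := by
  simpa only [Matrix.mul_assoc] using det_one_add_mul_comm (G * Bᴴ) (B * Gᴴ)

theorem det_one_add_mul_mul_conjTranspose_le_of_conjTranspose_mul_self_le [DecidableEq k]
    [DecidableEq m] [DecidableEq n] {Q : Matrix n n 𝕜} (hQ : Q.PosSemidef) {G : Matrix m n 𝕜}
    {H : Matrix k n 𝕜} (h : Gᴴ * G ≤ Hᴴ * H) : (1 + G * Q * Gᴴ).det ≤ (1 + H * Q * Hᴴ).det := by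
  obtain ⟨B, rfl⟩ := hQ.exists_eq_conjTranspose_mul_self
  rw [det_one_add_mul_conjTranspose_mul_self_mul_conjTranspose,
    det_one_add_mul_conjTranspose_mul_self_mul_conjTranspose]
  exact det_one_add_mul_mul_conjTranspose_le_of_le (posSemidef_conjTranspose_mul_self G) h B

theorem det_one_add_mul_smul_vecMulVec_mul_conjTranspose [DecidableEq m] (G : Matrix m n 𝕜)
    (c : ℝ) (v : n → 𝕜) :
    (1 + G * (c • vecMulVec v (star v)) * Gᴴ).det = 1 + c • (star v ⬝ᵥ (Gᴴ * G) *ᵥ v) := by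
  rw [Matrix.mul_smul, Matrix.smul_mul, mul_vecMulVec, vecMulVec_mul, ← star_mulVec,
    ← smul_vecMulVec, vecMulVec_eq Unit, det_one_add_replicateCol_mul_replicateRow,
    dotProduct_smul, star_mulVec, ← dotProduct_mulVec, mulVec_mulVec]

end Matrix

theorem Real.log_re_le_log_re_of_one_le {z w : ℂ} (hz : 1 ≤ z) (h : z ≤ w) :
    Real.log z.re ≤ Real.log w.re :=
  Real.log_le_log (by linarith [(Complex.le_def.1 hz).1, Complex.one_re]) (Complex.le_def.1 h).1

section Wiretap

variable {k m n : Type*} [Fintype k] [Fintype m] [Fintype n] [DecidableEq k] [DecidableEq m]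

noncomputable def mimoRate (σ2 : ℝ) (H : Matrix m n ℂ) (Rx : Matrix n n ℂ) : ℝ :=
  Real.log ((1 + ((σ2⁻¹ : ℝ) : ℂ) • (H * Rx * Hᴴ)).det.re)

def secrecyRates (σ2 P : ℝ) (G : Matrix m n ℂ) (H : Matrix k n ℂ) : Set ℝ :=
  {c | ∃ Rx : Matrix n n ℂ, Rx.PosSemidef ∧ Rx.trace.re ≤ P ∧
    c = mimoRate σ2 G Rx - mimoRate σ2 H Rx}

theorem mimoRate_eq (σ2 : ℝ) (H : Matrix m n ℂ) (Rx : Matrix n n ℂ) :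
    mimoRate σ2 H Rx = Real.log ((1 + H * (σ2⁻¹ • Rx) * Hᴴ).det.re) := by
  rw [mimoRate, Complex.coe_smul, Matrix.mul_smul, Matrix.smul_mul]

theorem mimoRate_smul_vecMulVec (σ2 : ℝ) (H : Matrix m n ℂ) (c : ℝ) (v : n → ℂ) :
    mimoRate σ2 H (c • vecMulVec v (star v)) =
      Real.log (1 + σ2⁻¹ * c * (star v ⬝ᵥ (Hᴴ * H) *ᵥ v).re) := by
  rw [mimoRate_eq, smul_smul, det_one_add_mul_smul_vecMulVec_mul_conjTranspose, Complex.add_re,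
    Complex.one_re, Complex.smul_re, smul_eq_mul]

theorem exists_pos_mem_secrecyRates {σ2 P : ℝ} (hσ : 0 < σ2) (hP : 0 < P) {G : Matrix m n ℂ}
    {H : Matrix k n ℂ} {t : ℝ} {v : n → ℂ} (ht : 0 < t) (hv : v ≠ 0)
    (hv' : (Gᴴ * G - Hᴴ * H) *ᵥ v = (t : ℂ) • v) : ∃ c ∈ secrecyRates σ2 P G H, 0 < c := by
  set q := (star v ⬝ᵥ v).re
  have hq : 0 < q := (Complex.pos_iff.1 (dotProduct_star_self_pos_iff.2 hv)).1
  have hc : 0 < P / q := div_pos hP hq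
  have htrace : ((P / q) • vecMulVec v (star v)).trace.re = P := by
    rw [trace_smul, trace_vecMulVec, dotProduct_comm, Complex.smul_re, smul_eq_mul,
      div_mul_cancel₀ _ hq.ne']
  refine ⟨_, ⟨_, (posSemidef_vecMulVec_self_star v).smul hc.le, htrace.le, rfl⟩, ?_⟩
  have hgap : (star v ⬝ᵥ (Gᴴ * G) *ᵥ v).re - (star v ⬝ᵥ (Hᴴ * H) *ᵥ v).re = t * q := by
    rw [← Complex.sub_re, ← dotProduct_sub, ← sub_mulVec, hv', dotProduct_smul, smul_eq_mul,
      Complex.re_ofReal_mul]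
  have hH : 0 ≤ (star v ⬝ᵥ (Hᴴ * H) *ᵥ v).re :=
    (posSemidef_conjTranspose_mul_self H).re_dotProduct_nonneg v
  have hs : 0 < σ2⁻¹ * (P / q) := mul_pos (inv_pos.2 hσ) hc
  rw [mimoRate_smul_vecMulVec, mimoRate_smul_vecMulVec, sub_pos]
  apply Real.log_lt_log <;> nlinarith [mul_pos ht hq]

variable [DecidableEq n]

theorem mimoRate_le_of_le {σ2 : ℝ} (hσ : 0 ≤ σ2) (H : Matrix m n ℂ) {Rx Rx' : Matrix n n ℂ}
    (hRx : Rx.PosSemidef) (h : Rx ≤ Rx') : mimoRate σ2 H Rx ≤ mimoRate σ2 H Rx' := by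
  have hRxs := hRx.smul (inv_nonneg.2 hσ)
  rw [mimoRate_eq, mimoRate_eq]
  exact Real.log_re_le_log_re_of_one_le (hRxs.mul_mul_conjTranspose_same H).one_le_det_one_add
    (det_one_add_mul_mul_conjTranspose_le_of_le hRxs
      (smul_le_smul_of_nonneg_left h (inv_nonneg.2 hσ)) H)

theorem mimoRate_nonneg {σ2 : ℝ} (hσ : 0 ≤ σ2) (H : Matrix m n ℂ) {Rx : Matrix n n ℂ}
    (hRx : Rx.PosSemidef) : 0 ≤ mimoRate σ2 H Rx := by
  simpa [mimoRate] using mimoRate_le_of_le hσ H PosSemidef.zero hRx.nonneg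

theorem mimoRate_le_of_conjTranspose_mul_self_le {σ2 : ℝ} (hσ : 0 ≤ σ2) {G : Matrix m n ℂ}
    {H : Matrix k n ℂ} (h : Gᴴ * G ≤ Hᴴ * H) {Rx : Matrix n n ℂ} (hRx : Rx.PosSemidef) :
    mimoRate σ2 G Rx ≤ mimoRate σ2 H Rx := by
  have hRxs := hRx.smul (inv_nonneg.2 hσ)
  rw [mimoRate_eq, mimoRate_eq]
  exact Real.log_re_le_log_re_of_one_le (hRxs.mul_mul_conjTranspose_same G).one_le_det_one_add
    (det_one_add_mul_mul_conjTranspose_le_of_conjTranspose_mul_self_le hRxs h)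

theorem bddAbove_secrecyRates {σ2 : ℝ} (hσ : 0 ≤ σ2) (P : ℝ) (G : Matrix m n ℂ)
    (H : Matrix k n ℂ) : BddAbove (secrecyRates σ2 P G H) := by
  refine ⟨mimoRate σ2 G (P • 1), ?_⟩
  rintro _ ⟨Rx, hRx, htr, rfl⟩
  linarith [mimoRate_le_of_le hσ G hRx (hRx.le_smul_one_of_re_trace_le htr),
    mimoRate_nonneg hσ H hRx]

theorem sSup_secrecyRates_nonpos {σ2 : ℝ} (hσ : 0 ≤ σ2) (P : ℝ) {G : Matrix m n ℂ}
    {H : Matrix k n ℂ} (h : Gᴴ * G ≤ Hᴴ * H) : sSup (secrecyRates σ2 P G H) ≤ 0 := by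
  refine Real.sSup_nonpos ?_
  rintro _ ⟨Rx, hRx, -, rfl⟩
  exact sub_nonpos.2 (mimoRate_le_of_conjTranspose_mul_self_le hσ h hRx)

end Wiretap

theorem stmt_0_general (nT nR nE : ℕ) (P σ2 : ℝ) (hP : 0 < P) (hσ : 0 < σ2)
    (HR : Matrix (Fin nR) (Fin nT) ℂ) (HE : Matrix (Fin nE) (Fin nT) ℂ) :
    0 < sSup {c : ℝ | ∃ Rx : Matrix (Fin nT) (Fin nT) ℂ, Rx.PosSemidef ∧ Rx.trace.re ≤ P ∧
        c = Real.log ((1 + ((σ2⁻¹ : ℝ) : ℂ) • (HR * Rx * HRᴴ)).det.re)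
          - Real.log ((1 + ((σ2⁻¹ : ℝ) : ℂ) • (HE * Rx * HEᴴ)).det.re)} ↔
      ∃ (t : ℝ) (v : Fin nT → ℂ), 0 < t ∧ v ≠ 0 ∧
        (HRᴴ * HR - HEᴴ * HE) *ᵥ v = (t : ℂ) • v := by
  change 0 < sSup (secrecyRates σ2 P HR HE) ↔ _
  constructor
  · contrapose!
    intro hno
    refine sSup_secrecyRates_nonpos hσ.le P (sub_nonpos.1 (not_not.1 fun h => ?_))
    obtain ⟨t, v, ht, hv, hv'⟩ :=
      ((isHermitian_conjTranspose_mul_self HR).sub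
        (isHermitian_conjTranspose_mul_self HE)).exists_pos_eigenvector_of_not_nonpos h
    exact hno t v ht hv hv'
  · rintro ⟨t, v, ht, hv, hv'⟩
    obtain ⟨c, hc, hpos⟩ := exists_pos_mem_secrecyRates hσ hP ht hv hv'
    exact lt_csSup_of_lt (bddAbove_secrecyRates hσ.le P HR HE) hc hpos

/-- For the Gaussian MIMO wiretap channel with power constraint
`Tr(R_x) ≤ P`, the supremum of the secrecy rate over positive semidefinite input
covariance matrices is strictly positive iff the Hermitian matrix
`H_R† H_R − H_E† H_E` has a positive eigenvalue. -/
theorem stmt_0 (nT nR nE : ℕ) (P σ2 : ℝ) (hP : 0 < P) (hσ : 0 < σ2)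
    (HR : Matrix (Fin nR) (Fin nT) ℂ) (HE : Matrix (Fin nE) (Fin nT) ℂ)
    (hne : HRᴴ * HR - HEᴴ * HE ≠ 0) :
    0 < sSup {c : ℝ | ∃ Rx : Matrix (Fin nT) (Fin nT) ℂ, Rx.PosSemidef ∧ Rx.trace.re ≤ P ∧
        c = Real.log ((1 + ((σ2⁻¹ : ℝ) : ℂ) • (HR * Rx * HRᴴ)).det.re)
          - Real.log ((1 + ((σ2⁻¹ : ℝ) : ℂ) • (HE * Rx * HEᴴ)).det.re)} ↔
      ∃ (t : ℝ) (v : Fin nT → ℂ), 0 < t ∧ v ≠ 0 ∧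
        (HRᴴ * HR - HEᴴ * HE) *ᵥ v = (t : ℂ) • v :=
  stmt_0_general nT nR nE P σ2 hP hσ HR HE
end

section
/- Let r, s ∈ ℂⁿ be nonzero vectors such that r†s ≠ 0 and r is not a scalar multiple of s. Set Δ = (‖r‖² + ‖s‖²)² − 4|r†s|². Then Δ > 0, and the Hermitian matrix r r† − s s† has rank two with exactly two nonzero eigenvalues η₁ = (‖r‖² − ‖s‖² + √Δ)/2 > 0 and η₂ = (‖r‖² − ‖s‖² − √Δ)/2 < 0. Moreover, with φ the argument of r†s, |c₂| = (‖r‖² + ‖s‖² − √Δ)/(2|r†s|) and |c₄| = (‖r‖² + ‖s‖² + √Δ)/(2|r†s|), the vectors r + |c₂| e^{i(π−φ)} s and r + |c₄| e^{i(π−φ)} s are (nonzero) eigenvectors of r r† − s s† for η₁ and η₂ respectively. (Equivalently, η₁ = ‖r‖² − |c₂||r†s| and η₂ = ‖r‖² − |c₄||r†s|.) -/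
open Matrix
open scoped ComplexOrder

/-!
The matrix `A = r r† - s s†` sends `w` to `(r†w) r - (s†w) s`, so its range lies in the plane
spanned by `r` and `s`. By strict Cauchy–Schwarz the Gram determinant `‖r‖²‖s‖² - |r†s|²` is
positive, which gives explicit preimages of `r` and `s`, hence rank two, and also gives `Δ > 0`.
On eigenvectors, `A` acts on the coordinates `(r†w, s†w)` through a `2 × 2` matrix with
characteristic polynomial `(μ - ‖r‖²)(μ + ‖s‖²) + |r†s|²`, whose roots are `η₁` and `η₂`.
Since `e^{i(π-φ)} = -conj (r†s) / |r†s|`, the vector `r + c e^{i(π-φ)} s` is an eigenvector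
for `η` as soon as `‖r‖² - c |r†s| = η` and `c (‖s‖² + η) = |r†s|`, and `(c₂, η₁)`, `(c₄, η₂)`
are the two solutions of this system.
-/

lemma discr_pos_of_sq_lt_mul {a b p : ℝ} (h : p ^ 2 < a * b) : 0 < (a + b) ^ 2 - 4 * p ^ 2 := by
  nlinarith [sq_nonneg (a - b)]

lemma abs_sub_lt_sqrt_discr {a b p : ℝ} (h : p ^ 2 < a * b) :
    |a - b| < √((a + b) ^ 2 - 4 * p ^ 2) := by
  rw [← Real.sqrt_sq_eq_abs]
  exact Real.sqrt_lt_sqrt (sq_nonneg _) (by nlinarith)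

lemma eq_or_eq_of_sub_mul_add_eq_neg_sq {a b p μ : ℝ} (hΔ : 0 ≤ (a + b) ^ 2 - 4 * p ^ 2)
    (h : (μ - a) * (μ + b) = -p ^ 2) :
    μ = (a - b + √((a + b) ^ 2 - 4 * p ^ 2)) / 2 ∨
      μ = (a - b - √((a + b) ^ 2 - 4 * p ^ 2)) / 2 := by
  have hd : discrim 1 (-(a - b)) (p ^ 2 - a * b)
      = √((a + b) ^ 2 - 4 * p ^ 2) * √((a + b) ^ 2 - 4 * p ^ 2) := by
    rw [discrim, Real.mul_self_sqrt hΔ]; ring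
  simpa using (quadratic_eq_zero_iff one_ne_zero hd μ).1 (by linear_combination h)

lemma sub_mul_eq_and_mul_add_eq {a b p σ : ℝ} (hp : p ≠ 0)
    (hσ : σ ^ 2 = (a + b) ^ 2 - 4 * p ^ 2) :
    a - (a + b - σ) / (2 * p) * p = (a - b + σ) / 2 ∧
      (a + b - σ) / (2 * p) * (b + (a - b + σ) / 2) = p := by
  constructor
  · field_simp; ring
  · field_simp; linear_combination -hσ

lemma Complex.exp_I_mul_pi_sub_arg {t : ℂ} (ht : t ≠ 0) :
    Complex.exp (Complex.I * ((Real.pi - t.arg : ℝ) : ℂ)) = -(star t / ‖t‖) := by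
  have hpolar : Complex.exp (t.arg * Complex.I) = t / ‖t‖ := by
    rw [eq_div_iff (by simpa using ht), mul_comm, Complex.norm_mul_exp_arg_mul_I]
  have hsplit : Complex.I * ((Real.pi - t.arg : ℝ) : ℂ)
      = Real.pi * Complex.I + starRingEnd ℂ (t.arg * Complex.I) := by
    simp only [map_mul, Complex.conj_ofReal, Complex.conj_I]; push_cast; ring
  rw [hsplit, Complex.exp_add, Complex.exp_pi_mul_I, Complex.exp_conj, hpolar, map_div₀,
    Complex.conj_ofReal, Complex.star_def, neg_one_mul]

namespace Matrix

variable {ι : Type*} [Fintype ι]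

lemma star_dotProduct_self_eq_ofReal_re (v : ι → ℂ) :
    star v ⬝ᵥ v = ((star v ⬝ᵥ v).re : ℂ) :=
  Complex.eq_re_of_ofReal_le (r := 0)
    (by rw [Complex.ofReal_zero]; exact dotProduct_star_self_nonneg v)

lemma star_dotProduct_mul_star_dotProduct (r s : ι → ℂ) :
    (star r ⬝ᵥ s) * (star s ⬝ᵥ r) = (‖star r ⬝ᵥ s‖ ^ 2 : ℝ) := by
  rw [star_dotProduct s r]
  exact_mod_cast Complex.mul_conj' _

lemma norm_star_dotProduct_sq_lt {r s : ι → ℂ} (hrs : LinearIndependent ℂ ![r, s]) :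
    ‖star r ⬝ᵥ s‖ ^ 2 < (star r ⬝ᵥ r).re * (star s ⬝ᵥ s).re := by
  obtain ⟨hs, hr⟩ := linearIndependent_fin2.1 hrs
  simp only [Matrix.cons_val_one, Matrix.cons_val_zero] at hs hr
  have hnorm (v : ι → ℂ) : ‖WithLp.toLp 2 v‖ ^ 2 = (star v ⬝ᵥ v).re := by
    rw [@norm_sq_eq_re_inner ℂ, EuclideanSpace.inner_toLp_toLp, dotProduct_comm]; rfl
  have hlt : ‖inner ℂ (WithLp.toLp 2 s) (WithLp.toLp 2 r)‖ <
      ‖WithLp.toLp 2 s‖ * ‖WithLp.toLp 2 r‖ := by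
    refine (norm_inner_le_norm _ _).lt_of_ne fun h => ?_
    rcases ((norm_inner_eq_norm_tfae ℂ _ _).out 0 2).1 h with h0 | ⟨c, hc⟩
    · exact hs (congrArg WithLp.ofLp h0)
    · exact hr c (congrArg WithLp.ofLp hc).symm
  rw [EuclideanSpace.inner_toLp_toLp, dotProduct_comm, star_dotProduct, norm_star] at hlt
  rw [← hnorm, ← hnorm, mul_comm, ← mul_pow]
  exact pow_lt_pow_left₀ hlt (norm_nonneg _) two_ne_zero

lemma vecMulVec_sub_vecMulVec_mulVec (r s w : ι → ℂ) :
    (vecMulVec r (star r) - vecMulVec s (star s)) *ᵥ w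
      = (star r ⬝ᵥ w) • r - (star s ⬝ᵥ w) • s := by
  simp [sub_mulVec, vecMulVec_mulVec]

lemma range_mulVecLin_vecMulVec_sub_vecMulVec {r s : ι → ℂ} (hrs : LinearIndependent ℂ ![r, s]) :
    LinearMap.range (vecMulVec r (star r) - vecMulVec s (star s)).mulVecLin
      = Submodule.span ℂ {r, s} := by
  have hg : (star r ⬝ᵥ r) * (star s ⬝ᵥ s) - (star r ⬝ᵥ s) * (star s ⬝ᵥ r) ≠ 0 := by
    rw [star_dotProduct_mul_star_dotProduct, star_dotProduct_self_eq_ofReal_re r,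
      star_dotProduct_self_eq_ofReal_re s]
    exact_mod_cast (sub_pos.2 (norm_star_dotProduct_sq_lt hrs)).ne'
  have hmulVec (a b : ℂ) : (vecMulVec r (star r) - vecMulVec s (star s)) *ᵥ (a • r + b • s)
      = (a * (star r ⬝ᵥ r) + b * (star r ⬝ᵥ s)) • r
        - (a * (star s ⬝ᵥ r) + b * (star s ⬝ᵥ s)) • s := by
    simp only [vecMulVec_sub_vecMulVec_mulVec, dotProduct_add, dotProduct_smul, smul_eq_mul]
  set R := star r ⬝ᵥ r
  set S := star s ⬝ᵥ s
  set t := star r ⬝ᵥ s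
  set t' := star s ⬝ᵥ r
  refine le_antisymm ?_ ?_
  · rintro _ ⟨w, rfl⟩
    rw [mulVecLin_apply, vecMulVec_sub_vecMulVec_mulVec]
    exact sub_mem (Submodule.smul_mem _ _ (Submodule.subset_span (by simp)))
      (Submodule.smul_mem _ _ (Submodule.subset_span (by simp)))
  · rw [Submodule.span_le, Set.insert_subset_iff, Set.singleton_subset_iff]
    refine ⟨⟨(S / (R * S - t * t')) • r + (-t' / (R * S - t * t')) • s, ?_⟩,
      ⟨(t / (R * S - t * t')) • r + (-R / (R * S - t * t')) • s, ?_⟩⟩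
    · have h₁ : S / (R * S - t * t') * R + -t' / (R * S - t * t') * t = 1 := by
        rw [← div_self hg]; ring
      have h₂ : S / (R * S - t * t') * t' + -t' / (R * S - t * t') * S = 0 := by ring
      rw [mulVecLin_apply, hmulVec, h₁, h₂, one_smul, zero_smul, sub_zero]
    · have h₁ : t / (R * S - t * t') * R + -R / (R * S - t * t') * t = 0 := by ring
      have h₂ : t / (R * S - t * t') * t' + -R / (R * S - t * t') * S = -1 := by
        rw [← neg_div_self hg]; ring
      rw [mulVecLin_apply, hmulVec, h₁, h₂, zero_smul, neg_one_smul, zero_sub, neg_neg]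

theorem rank_vecMulVec_sub_vecMulVec {r s : ι → ℂ} (hrs : LinearIndependent ℂ ![r, s]) :
    (vecMulVec r (star r) - vecMulVec s (star s)).rank = 2 := by
  rw [rank, range_mulVecLin_vecMulVec_sub_vecMulVec hrs, ← range_cons_cons_empty r s ![],
    finrank_span_eq_card hrs, Fintype.card_fin]

lemma eq_zero_or_of_mulVec_vecMulVec_sub_vecMulVec {r s w : ι → ℂ} {μ : ℂ} (hw : w ≠ 0)
    (h : (vecMulVec r (star r) - vecMulVec s (star s)) *ᵥ w = μ • w) :
    μ = 0 ∨ (μ - star r ⬝ᵥ r) * (μ + star s ⬝ᵥ s) + (star r ⬝ᵥ s) * (star s ⬝ᵥ r) = 0 := by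
  refine or_iff_not_imp_left.2 fun hμ => ?_
  rw [vecMulVec_sub_vecMulVec_mulVec] at h
  set α := star r ⬝ᵥ w
  set β := star s ⬝ᵥ w
  have e₁ : α * (star r ⬝ᵥ r) - β * (star r ⬝ᵥ s) = μ * α := by
    simpa [dotProduct_sub, dotProduct_smul, α, mul_comm] using congrArg (star r ⬝ᵥ ·) h
  have e₂ : α * (star s ⬝ᵥ r) - β * (star s ⬝ᵥ s) = μ * β := by
    simpa [dotProduct_sub, dotProduct_smul, β, mul_comm] using congrArg (star s ⬝ᵥ ·) h
  by_contra hD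
  have hα : α = 0 := by
    refine (mul_eq_zero.1 (?_ : _ * α = 0)).resolve_left hD
    linear_combination -(μ + star s ⬝ᵥ s) * e₁ + (star r ⬝ᵥ s) * e₂
  have hβ : β = 0 := by
    refine (mul_eq_zero.1 (?_ : _ * β = 0)).resolve_left hD
    linear_combination -(star s ⬝ᵥ r) * e₁ - (μ - star r ⬝ᵥ r) * e₂
  rw [hα, hβ, zero_smul, zero_smul, sub_zero, eq_comm, smul_eq_zero] at h
  exact h.elim hμ hw

lemma IsHermitian.eigenvalues_eq_zero_or_of_vecMulVec_sub_vecMulVec [DecidableEq ι]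
    {r s : ι → ℂ} (hA : (vecMulVec r (star r) - vecMulVec s (star s)).IsHermitian) (i : ι) :
    hA.eigenvalues i = 0 ∨ (hA.eigenvalues i - (star r ⬝ᵥ r).re) *
      (hA.eigenvalues i + (star s ⬝ᵥ s).re) = -‖star r ⬝ᵥ s‖ ^ 2 := by
  have hw : ⇑(hA.eigenvectorBasis i) ≠ 0 := fun h =>
    hA.eigenvectorBasis.orthonormal.ne_zero i (by simpa using congrArg (WithLp.toLp 2) h)
  have hv := hA.mulVec_eigenvectorBasis i
  rw [← Complex.coe_smul] at hv
  rcases eq_zero_or_of_mulVec_vecMulVec_sub_vecMulVec hw hv with h | h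
  · exact Or.inl (by exact_mod_cast h)
  · right
    rw [star_dotProduct_self_eq_ofReal_re r, star_dotProduct_self_eq_ofReal_re s,
      star_dotProduct_mul_star_dotProduct] at h
    exact_mod_cast eq_neg_of_add_eq_zero_left h

lemma mulVec_add_smul_eq_smul {r s : ι → ℂ} (hrs : star r ⬝ᵥ s ≠ 0) {c η : ℝ}
    (h₁ : (star r ⬝ᵥ r).re - c * ‖star r ⬝ᵥ s‖ = η)
    (h₂ : c * ((star s ⬝ᵥ s).re + η) = ‖star r ⬝ᵥ s‖) :
    (vecMulVec r (star r) - vecMulVec s (star s)) *ᵥ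
        (r + ((c : ℂ) * Complex.exp (Complex.I * ((Real.pi - (star r ⬝ᵥ s).arg : ℝ) : ℂ))) • s)
      = (η : ℂ) • (r + ((c : ℂ) *
          Complex.exp (Complex.I * ((Real.pi - (star r ⬝ᵥ s).arg : ℝ) : ℂ))) • s) := by
  have hp : (‖star r ⬝ᵥ s‖ : ℂ) ≠ 0 := by simpa using hrs
  have hsq : star (star r ⬝ᵥ s) * (star r ⬝ᵥ s) = (‖star r ⬝ᵥ s‖ : ℂ) ^ 2 :=
    Complex.conj_mul' _
  rw [Complex.exp_I_mul_pi_sub_arg hrs, vecMulVec_sub_vecMulVec_mulVec]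
  have hα : star r ⬝ᵥ (r + ((c : ℂ) * -(star (star r ⬝ᵥ s) / ‖star r ⬝ᵥ s‖)) • s) = η := by
    rw [dotProduct_add, dotProduct_smul, smul_eq_mul, star_dotProduct_self_eq_ofReal_re r, ← h₁]
    push_cast; field_simp; linear_combination (-c : ℂ) * hsq
  have hβ : star s ⬝ᵥ (r + ((c : ℂ) * -(star (star r ⬝ᵥ s) / ‖star r ⬝ᵥ s‖)) • s)
      = -(η * ((c : ℂ) * -(star (star r ⬝ᵥ s) / ‖star r ⬝ᵥ s‖))) := by
    have h₂' : (c : ℂ) * ((star s ⬝ᵥ s).re + η) = ‖star r ⬝ᵥ s‖ := by exact_mod_cast h₂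
    rw [dotProduct_add, dotProduct_smul, smul_eq_mul, star_dotProduct_self_eq_ofReal_re s,
      star_dotProduct s r]
    field_simp; linear_combination -star (star r ⬝ᵥ s) * h₂'
  rw [hα, hβ]
  module

end Matrix

theorem stmt_2_general (n : ℕ) (r s : Fin n → ℂ)
    (hip : star r ⬝ᵥ s ≠ 0) (hind : ∀ c : ℂ, r ≠ c • s)
    (hA : (vecMulVec r (star r) - vecMulVec s (star s)).IsHermitian)
    (nr ns ip Δ η₁ η₂ c2 c4 φ : ℝ)
    (hnr : nr = (star r ⬝ᵥ r).re) (hns : ns = (star s ⬝ᵥ s).re)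
    (hipd : ip = ‖star r ⬝ᵥ s‖)
    (hΔ : Δ = (nr + ns) ^ 2 - 4 * ip ^ 2)
    (hη₁ : η₁ = (nr - ns + Real.sqrt Δ) / 2)
    (hη₂ : η₂ = (nr - ns - Real.sqrt Δ) / 2)
    (hc2 : c2 = (nr + ns - Real.sqrt Δ) / (2 * ip))
    (hc4 : c4 = (nr + ns + Real.sqrt Δ) / (2 * ip))
    (hφ : φ = (star r ⬝ᵥ s).arg) :
    0 < Δ ∧
    (vecMulVec r (star r) - vecMulVec s (star s)).rank = 2 ∧
    0 < η₁ ∧ η₂ < 0 ∧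
    (∀ i, hA.eigenvalues i = η₁ ∨ hA.eigenvalues i = η₂ ∨ hA.eigenvalues i = 0) ∧
    r + ((c2 : ℂ) * Complex.exp (Complex.I * ((Real.pi - φ : ℝ) : ℂ))) • s ≠ 0 ∧
    r + ((c4 : ℂ) * Complex.exp (Complex.I * ((Real.pi - φ : ℝ) : ℂ))) • s ≠ 0 ∧
    (vecMulVec r (star r) - vecMulVec s (star s)) *ᵥ
        (r + ((c2 : ℂ) * Complex.exp (Complex.I * ((Real.pi - φ : ℝ) : ℂ))) • s)
      = (η₁ : ℂ) • (r + ((c2 : ℂ) * Complex.exp (Complex.I * ((Real.pi - φ : ℝ) : ℂ))) • s) ∧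
    (vecMulVec r (star r) - vecMulVec s (star s)) *ᵥ
        (r + ((c4 : ℂ) * Complex.exp (Complex.I * ((Real.pi - φ : ℝ) : ℂ))) • s)
      = (η₂ : ℂ) • (r + ((c4 : ℂ) * Complex.exp (Complex.I * ((Real.pi - φ : ℝ) : ℂ))) • s) := by
  have hs : s ≠ 0 := by rintro rfl; simp at hip
  have hrs : LinearIndependent ℂ ![r, s] :=
    linearIndependent_fin2.2 ⟨by simpa using hs, fun a => by simpa using (hind a).symm⟩
  have hcs := norm_star_dotProduct_sq_lt hrs
  have hp : ‖star r ⬝ᵥ s‖ ≠ 0 := norm_ne_zero_iff.2 hip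
  subst hnr hns hipd hΔ hη₁ hη₂ hc2 hc4 hφ
  have hΔ := discr_pos_of_sq_lt_mul hcs
  have hgap := abs_lt.1 (abs_sub_lt_sqrt_discr hcs)
  have hsqrt := Real.sq_sqrt hΔ.le
  obtain ⟨h₁, h₂⟩ := sub_mul_eq_and_mul_add_eq hp hsqrt
  obtain ⟨h₃, h₄⟩ := sub_mul_eq_and_mul_add_eq (σ := -Real.sqrt _) hp (by rwa [neg_sq])
  simp only [sub_neg_eq_add, ← sub_eq_add_neg] at h₃ h₄
  have hne (c : ℂ) : r + c • s ≠ 0 := fun h =>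
    hind (-c) (by rw [neg_smul, eq_neg_of_add_eq_zero_left h])
  refine ⟨hΔ, rank_vecMulVec_sub_vecMulVec hrs, by linarith, by linarith, fun i => ?_,
    hne _, hne _, mulVec_add_smul_eq_smul hip h₁ h₂, mulVec_add_smul_eq_smul hip h₃ h₄⟩
  rcases hA.eigenvalues_eq_zero_or_of_vecMulVec_sub_vecMulVec i with h | h
  · exact Or.inr (Or.inr h)
  · exact (eq_or_eq_of_sub_mul_add_eq_neg_sq hΔ.le h).imp_right Or.inl

/-- For nonzero vectors `r, s ∈ ℂⁿ` with `r†s ≠ 0` and `r` not a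
scalar multiple of `s`, setting `Δ = (‖r‖² + ‖s‖²)² − 4|r†s|²`, we have `Δ > 0`,
`r r† − s s†` has rank two with exactly two nonzero eigenvalues
`η₁ = (‖r‖² − ‖s‖² + √Δ)/2 > 0` and `η₂ = (‖r‖² − ‖s‖² − √Δ)/2 < 0`, and
`r + |c₂| e^{i(π−φ)} s`, `r + |c₄| e^{i(π−φ)} s` are nonzero eigenvectors for
`η₁`, `η₂` respectively, where `φ = arg(r†s)`,
`|c₂| = (‖r‖² + ‖s‖² − √Δ)/(2|r†s|)`, `|c₄| = (‖r‖² + ‖s‖² + √Δ)/(2|r†s|)`. -/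
theorem stmt_2 (n : ℕ) (r s : Fin n → ℂ) (hr : r ≠ 0) (hs : s ≠ 0)
    (hip : star r ⬝ᵥ s ≠ 0) (hind : ∀ c : ℂ, r ≠ c • s)
    (hA : (vecMulVec r (star r) - vecMulVec s (star s)).IsHermitian)
    (nr ns ip Δ η₁ η₂ c2 c4 φ : ℝ)
    (hnr : nr = (star r ⬝ᵥ r).re) (hns : ns = (star s ⬝ᵥ s).re)
    (hipd : ip = ‖star r ⬝ᵥ s‖)
    (hΔ : Δ = (nr + ns) ^ 2 - 4 * ip ^ 2)
    (hη₁ : η₁ = (nr - ns + Real.sqrt Δ) / 2)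
    (hη₂ : η₂ = (nr - ns - Real.sqrt Δ) / 2)
    (hc2 : c2 = (nr + ns - Real.sqrt Δ) / (2 * ip))
    (hc4 : c4 = (nr + ns + Real.sqrt Δ) / (2 * ip))
    (hφ : φ = (star r ⬝ᵥ s).arg) :
    0 < Δ ∧
    (vecMulVec r (star r) - vecMulVec s (star s)).rank = 2 ∧
    0 < η₁ ∧ η₂ < 0 ∧
    (∀ i, hA.eigenvalues i = η₁ ∨ hA.eigenvalues i = η₂ ∨ hA.eigenvalues i = 0) ∧
    r + ((c2 : ℂ) * Complex.exp (Complex.I * ((Real.pi - φ : ℝ) : ℂ))) • s ≠ 0 ∧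
    r + ((c4 : ℂ) * Complex.exp (Complex.I * ((Real.pi - φ : ℝ) : ℂ))) • s ≠ 0 ∧
    (vecMulVec r (star r) - vecMulVec s (star s)) *ᵥ
        (r + ((c2 : ℂ) * Complex.exp (Complex.I * ((Real.pi - φ : ℝ) : ℂ))) • s)
      = (η₁ : ℂ) • (r + ((c2 : ℂ) * Complex.exp (Complex.I * ((Real.pi - φ : ℝ) : ℂ))) • s) ∧
    (vecMulVec r (star r) - vecMulVec s (star s)) *ᵥ
        (r + ((c4 : ℂ) * Complex.exp (Complex.I * ((Real.pi - φ : ℝ) : ℂ))) • s)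
      = (η₂ : ℂ) • (r + ((c4 : ℂ) * Complex.exp (Complex.I * ((Real.pi - φ : ℝ) : ℂ))) • s) :=
  stmt_2_general n r s hip hind hA nr ns ip Δ η₁ η₂ c2 c4 φ hnr hns hipd hΔ hη₁ hη₂ hc2 hc4 hφ
end

section
/- Let h_R, h_E ∈ ℂ^{n_T} be nonzero and ρ > 0. Define F(α) = 1 + ρ‖h_R‖²/2 − (1 + ρ‖h_E‖²/2)α + (ρ/2)√((‖h_R‖² + α‖h_E‖²)² − 4α|h_R†h_E|²) for α > 0 (the quantity under the square root is nonnegative for all α > 0). Then F is strictly decreasing on (0, ∞) and has a unique zero there, equal to α° = (b + √(b² − 4ac))/(2a), where a = 1 + ρ‖h_E‖², b = 2 + ρ‖h_R‖² + ρ‖h_E‖² + ρ²(‖h_R‖²‖h_E‖² − |h_R†h_E|²), c = 1 + ρ‖h_R‖². -/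
/-!
Write `g t = (nr + t ns)² - 4 t ip2` with `nr = ‖h_R‖²`, `ns = ‖h_E‖²`, `ip2 = |h_R†h_E|²`, so that
`0 ≤ ip2 ≤ nr ns` by Cauchy–Schwarz. Then `g t = (nr - t ns)² + 4 t (nr ns - ip2) ≥ 0`, and squaring
shows that `√g` grows with slope at most `ns`; hence `F t₂ + (t₂ - t₁) ≤ F t₁`, so `F` is strictly
decreasing. Moving the square root to one side and squaring turns `F t = 0` into `a t² - b t + c = 0`,
and since `b ≥ a + c` the larger root `α°` satisfies `a α° ≥ max a c`, which makes the side carrying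
the square root nonnegative; so `F α° = 0`, and injectivity gives uniqueness.
-/

open Matrix
open scoped ComplexOrder

lemma norm_star_dotProduct_sq_le {𝕜 ι : Type*} [RCLike 𝕜] [Fintype ι] (u v : ι → 𝕜) :
    ‖star u ⬝ᵥ v‖ ^ 2 ≤ RCLike.re (star u ⬝ᵥ u) * RCLike.re (star v ⬝ᵥ v) := by
  have h := inner_mul_inner_self_le (𝕜 := 𝕜) (WithLp.toLp 2 u) (WithLp.toLp 2 v)
  rw [norm_inner_symm (WithLp.toLp 2 v), ← sq] at h
  simpa only [EuclideanSpace.inner_toLp_toLp, dotProduct_comm _ (star _)] using h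

lemma re_star_dotProduct_self_nonneg {ι : Type*} [Fintype ι] (u : ι → ℂ) :
    0 ≤ (star u ⬝ᵥ u).re :=
  (Complex.nonneg_iff.1 (dotProduct_star_self_nonneg u)).1

section LargerRoot

variable {a b c : ℝ}

lemma larger_root_isRoot (ha : a ≠ 0) (hd : 0 ≤ b ^ 2 - 4 * a * c) :
    a * ((b + √(b ^ 2 - 4 * a * c)) / (2 * a)) ^ 2
      - b * ((b + √(b ^ 2 - 4 * a * c)) / (2 * a)) + c = 0 := by
  have hdiscrim : discrim a (-b) c = √(b ^ 2 - 4 * a * c) * √(b ^ 2 - 4 * a * c) := by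
    rw [Real.mul_self_sqrt hd, discrim]; ring
  have h := (quadratic_eq_zero_iff ha hdiscrim _).2 (Or.inl (by rw [neg_neg]))
  linear_combination h

lemma sq_sub_le_discrim (hac : 0 ≤ a + c) (hb : a + c ≤ b) :
    (a - c) ^ 2 ≤ b ^ 2 - 4 * a * c := by
  nlinarith [mul_self_le_mul_self hac hb]

lemma max_le_mul_larger_root (ha : 0 < a) (hc : 0 ≤ c) (hb : a + c ≤ b) :
    max a c ≤ a * ((b + √(b ^ 2 - 4 * a * c)) / (2 * a)) := by
  have hs : |a - c| ≤ √(b ^ 2 - 4 * a * c) := by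
    rw [← Real.sqrt_sq_eq_abs]; exact Real.sqrt_le_sqrt (sq_sub_le_discrim (by linarith) hb)
  have hmul : a * ((b + √(b ^ 2 - 4 * a * c)) / (2 * a)) = (b + √(b ^ 2 - 4 * a * c)) / 2 := by
    field_simp
  rw [hmul, max_le_iff]
  constructor <;> linarith [le_abs_self (a - c), neg_abs_le (a - c)]

end LargerRoot

section Radicand

variable {nr ns ip2 t : ℝ}

lemma radicand_nonneg (hcs : ip2 ≤ nr * ns) (ht : 0 ≤ t) :
    0 ≤ (nr + t * ns) ^ 2 - 4 * t * ip2 := by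
  nlinarith [sq_nonneg (nr - t * ns), mul_nonneg ht (sub_nonneg.2 hcs)]

lemma radicand_slope_le (hns : 0 ≤ ns) (hip : 0 ≤ ip2) (hcs : ip2 ≤ nr * ns) :
    ns * (nr + t * ns) - 2 * ip2 ≤ ns * √((nr + t * ns) ^ 2 - 4 * t * ip2) := by
  rcases le_or_gt (ns * (nr + t * ns) - 2 * ip2) 0 with h | h
  · exact h.trans (by positivity)
  · have hsq : (ns * (nr + t * ns) - 2 * ip2) ^ 2 ≤ ns ^ 2 * ((nr + t * ns) ^ 2 - 4 * t * ip2) := by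
      nlinarith [mul_nonneg hip (sub_nonneg.2 hcs)]
    have := Real.sqrt_le_sqrt hsq
    rwa [Real.sqrt_sq h.le, Real.sqrt_mul (sq_nonneg ns), Real.sqrt_sq hns] at this

lemma sqrt_radicand_le_add {t₁ t₂ : ℝ} (hns : 0 ≤ ns) (hip : 0 ≤ ip2) (hcs : ip2 ≤ nr * ns)
    (ht₁ : 0 ≤ t₁) (h₁₂ : t₁ ≤ t₂) :
    √((nr + t₂ * ns) ^ 2 - 4 * t₂ * ip2)
      ≤ √((nr + t₁ * ns) ^ 2 - 4 * t₁ * ip2) + ns * (t₂ - t₁) := by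
  have hΔ : 0 ≤ t₂ - t₁ := sub_nonneg.2 h₁₂
  have hsq := Real.sq_sqrt (radicand_nonneg hcs ht₁)
  have hslope := mul_le_mul_of_nonneg_left (radicand_slope_le (t := t₁) hns hip hcs) hΔ
  refine Real.sqrt_le_iff.2 ⟨by positivity, ?_⟩
  nlinarith

end Radicand

noncomputable def paramF (ρ nr ns ip2 t : ℝ) : ℝ :=
  1 + ρ * nr / 2 - (1 + ρ * ns / 2) * t + (ρ / 2) * √((nr + t * ns) ^ 2 - 4 * t * ip2)

section ParamF

variable {ρ nr ns ip2 : ℝ}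

lemma paramF_add_sub_le {t₁ t₂ : ℝ} (hρ : 0 ≤ ρ) (hns : 0 ≤ ns) (hip : 0 ≤ ip2)
    (hcs : ip2 ≤ nr * ns) (ht₁ : 0 ≤ t₁) (h₁₂ : t₁ ≤ t₂) :
    paramF ρ nr ns ip2 t₂ + (t₂ - t₁) ≤ paramF ρ nr ns ip2 t₁ := by
  have := mul_le_mul_of_nonneg_left (sqrt_radicand_le_add hns hip hcs ht₁ h₁₂)
    (by positivity : 0 ≤ ρ / 2)
  unfold paramF
  linarith

lemma paramF_strictAntiOn (hρ : 0 ≤ ρ) (hns : 0 ≤ ns) (hip : 0 ≤ ip2) (hcs : ip2 ≤ nr * ns) :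
    StrictAntiOn (paramF ρ nr ns ip2) (Set.Ici 0) := fun _ ht₁ _ _ h₁₂ ↦ by
  linarith [paramF_add_sub_le hρ hns hip hcs ht₁ h₁₂.le]

/-- `L² - (ρ / 2)² g` is the quadratic `a t² - b t + c`, where `L` is the affine part of `-F`. -/
lemma paramF_eq_zero_of_isRoot {t : ℝ} (hρ : 0 ≤ ρ)
    (hL : 1 + ρ * nr / 2 ≤ (1 + ρ * ns / 2) * t)
    (hroot : (1 + ρ * ns) * t ^ 2 - (2 + ρ * nr + ρ * ns + ρ ^ 2 * (nr * ns - ip2)) * t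
      + (1 + ρ * nr) = 0) :
    paramF ρ nr ns ip2 t = 0 := by
  have hsq : (ρ / 2) ^ 2 * ((nr + t * ns) ^ 2 - 4 * t * ip2)
      = ((1 + ρ * ns / 2) * t - (1 + ρ * nr / 2)) ^ 2 := by
    linear_combination -hroot
  have hsqrt : (ρ / 2) * √((nr + t * ns) ^ 2 - 4 * t * ip2)
      = (1 + ρ * ns / 2) * t - (1 + ρ * nr / 2) := by
    rw [← Real.sqrt_sq (by positivity : 0 ≤ ρ / 2), ← Real.sqrt_mul (sq_nonneg _), hsq,
      Real.sqrt_sq (sub_nonneg.2 hL)]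
  unfold paramF
  linarith

end ParamF

theorem stmt_4_general (nT : ℕ) (hR hE : Fin nT → ℂ)
    (ρ : ℝ) (hρ : 0 < ρ) (nr ns ip2 a b c α : ℝ) (F : ℝ → ℝ)
    (hnr : nr = (star hR ⬝ᵥ hR).re) (hns : ns = (star hE ⬝ᵥ hE).re)
    (hip2 : ip2 = ‖star hR ⬝ᵥ hE‖ ^ 2)
    (ha : a = 1 + ρ * ns)
    (hb : b = 2 + ρ * nr + ρ * ns + ρ ^ 2 * (nr * ns - ip2))
    (hc : c = 1 + ρ * nr)
    (hα : α = (b + Real.sqrt (b ^ 2 - 4 * a * c)) / (2 * a))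
    (hF : F = fun t : ℝ => 1 + ρ * nr / 2 - (1 + ρ * ns / 2) * t
        + (ρ / 2) * Real.sqrt ((nr + t * ns) ^ 2 - 4 * t * ip2)) :
    (∀ t : ℝ, 0 < t → 0 ≤ (nr + t * ns) ^ 2 - 4 * t * ip2) ∧
    StrictAntiOn F (Set.Ioi 0) ∧
    0 < α ∧ F α = 0 ∧
    ∀ t : ℝ, 0 < t → F t = 0 → t = α := by
  have hnr0 : 0 ≤ nr := hnr ▸ re_star_dotProduct_self_nonneg hR
  have hns0 : 0 ≤ ns := hns ▸ re_star_dotProduct_self_nonneg hE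
  have hip0 : 0 ≤ ip2 := hip2 ▸ sq_nonneg _
  have hcs : ip2 ≤ nr * ns := hnr ▸ hns ▸ hip2 ▸ norm_star_dotProduct_sq_le hR hE
  have ha0 : 0 < a := by rw [ha]; positivity
  have hc0 : 0 ≤ c := by rw [hc]; positivity
  have hbac : a + c ≤ b := by
    rw [ha, hb, hc]; linarith [mul_nonneg (sq_nonneg ρ) (sub_nonneg.2 hcs)]
  have hmax : max a c ≤ a * α := hα ▸ max_le_mul_larger_root ha0 hc0 hbac
  have hα1 : 1 ≤ α := by nlinarith [le_max_left a c]
  have hroot : a * α ^ 2 - b * α + c = 0 := hα ▸ larger_root_isRoot ha0.ne'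
    ((sq_nonneg _).trans (sq_sub_le_discrim (by linarith) hbac))
  have hanti : StrictAntiOn F (Set.Ici 0) := hF ▸ paramF_strictAntiOn hρ.le hns0 hip0 hcs
  have hFα : F α = 0 := hF ▸ paramF_eq_zero_of_isRoot hρ.le
    (by nlinarith [le_max_right a c]) (by rw [ha, hb, hc] at hroot; exact hroot)
  exact ⟨fun t ht ↦ radicand_nonneg hcs ht.le, hanti.mono Set.Ioi_subset_Ici_self, by linarith,
    hFα, fun t ht hFt ↦ hanti.injOn ht.le (by linarith : (0:ℝ) ≤ α) (hFt.trans hFα.symm)⟩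

/-- The parametric function
`F(α) = 1 + ρ‖h_R‖²/2 − (1 + ρ‖h_E‖²/2)α + (ρ/2)√((‖h_R‖² + α‖h_E‖²)² − 4α|h_R†h_E|²)`
is well defined (the radicand is nonnegative for `α > 0`), strictly decreasing on
`(0, ∞)`, and has a unique zero there, equal to `α° = (b + √(b² − 4ac))/(2a)`. -/
theorem stmt_4 (nT : ℕ) (hR hE : Fin nT → ℂ) (hRne : hR ≠ 0) (hEne : hE ≠ 0)
    (ρ : ℝ) (hρ : 0 < ρ) (nr ns ip2 a b c α : ℝ) (F : ℝ → ℝ)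
    (hnr : nr = (star hR ⬝ᵥ hR).re) (hns : ns = (star hE ⬝ᵥ hE).re)
    (hip2 : ip2 = ‖star hR ⬝ᵥ hE‖ ^ 2)
    (ha : a = 1 + ρ * ns)
    (hb : b = 2 + ρ * nr + ρ * ns + ρ ^ 2 * (nr * ns - ip2))
    (hc : c = 1 + ρ * nr)
    (hα : α = (b + Real.sqrt (b ^ 2 - 4 * a * c)) / (2 * a))
    (hF : F = fun t : ℝ => 1 + ρ * nr / 2 - (1 + ρ * ns / 2) * t
        + (ρ / 2) * Real.sqrt ((nr + t * ns) ^ 2 - 4 * t * ip2)) :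
    (∀ t : ℝ, 0 < t → 0 ≤ (nr + t * ns) ^ 2 - 4 * t * ip2) ∧
    StrictAntiOn F (Set.Ioi 0) ∧
    0 < α ∧ F α = 0 ∧
    ∀ t : ℝ, 0 < t → F t = 0 → t = α :=
  stmt_4_general nT hR hE ρ hρ nr ns ip2 a b c α F hnr hns hip2 ha hb hc hα hF
end

section
/- In the MISO wiretap channel, suppose h_R = ξ h_E for a scalar ξ ∈ ℂ with h_E ≠ 0. (a) If |ξ| < 1 and n_T ≥ 2, then the secrecy capacity is zero: sup_{Q ∈ Ω} [log(1 + ρ h_R†Q h_R) − log(1 + ρ h_E†Q h_E)] = 0. (b) If |ξ| > 1, then the secrecy capacity equals log((1 + ρ|ξ|²‖h_E‖²)/(1 + ρ‖h_E‖²)) > 0, and it is attained at Q = h_E h_E†/‖h_E‖². -/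
/-!
With `h_R = ξ h_E` the secrecy rate of `Q` depends only on the eavesdropper's gain
`s = h_E† Q h_E`, as `log (1 + ρ |ξ|² s) - log (1 + ρ s)`, and `0 ≤ s ≤ Tr Q ‖h_E‖²`
(write `Q = B† B` and apply Cauchy–Schwarz to each row of `B`).
If `|ξ| < 1` the rate is never positive, and it vanishes for the projection onto a nonzero vector
orthogonal to `h_E`, which exists once `n_T ≥ 2`. If `|ξ| > 1` the rate increases with `s`, so it
is maximal at `s = ‖h_E‖²`, which the projection onto `h_E` attains.
-/

open Matrix
open scoped ComplexOrder

namespace Matrix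

variable {ι 𝕜 : Type*} [Fintype ι] [RCLike 𝕜]

lemma re_star_dotProduct_self (w : ι → 𝕜) : RCLike.re (star w ⬝ᵥ w) = ∑ i, ‖w i‖ ^ 2 := by
  simp only [dotProduct, Pi.star_apply, RCLike.star_def, RCLike.conj_mul, map_sum,
    RCLike.re_ofReal_pow]

lemma norm_dotProduct_sq_le (u w : ι → 𝕜) :
    ‖u ⬝ᵥ w‖ ^ 2 ≤ (∑ i, ‖u i‖ ^ 2) * ∑ i, ‖w i‖ ^ 2 :=
  calc ‖u ⬝ᵥ w‖ ^ 2 ≤ (∑ i, ‖u i‖ * ‖w i‖) ^ 2 := by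
        gcongr
        simpa [dotProduct] using norm_sum_le Finset.univ fun i => u i * w i
    _ ≤ _ := Finset.sum_mul_sq_le_sq_mul_sq _ _ _

lemma re_trace_conjTranspose_mul_self (B : Matrix ι ι 𝕜) :
    RCLike.re (Bᴴ * B).trace = ∑ i, ∑ j, ‖B i j‖ ^ 2 := by
  simp only [trace, diag_apply, mul_apply, conjTranspose_apply, RCLike.star_def, RCLike.conj_mul,
    map_sum, RCLike.re_ofReal_pow]
  exact Finset.sum_comm

lemma PosSemidef.re_dotProduct_mulVec_le {Q : Matrix ι ι 𝕜} (hQ : Q.PosSemidef) (w : ι → 𝕜) :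
    RCLike.re (star w ⬝ᵥ Q *ᵥ w) ≤ RCLike.re Q.trace * RCLike.re (star w ⬝ᵥ w) := by
  classical
  obtain ⟨B, rfl⟩ : ∃ B : Matrix ι ι 𝕜, Q = Bᴴ * B := by
    open scoped MatrixOrder in
    exact CStarAlgebra.nonneg_iff_eq_star_mul_self.mp hQ.nonneg
  rw [← mulVec_mulVec, dotProduct_mulVec, ← star_mulVec,
    re_trace_conjTranspose_mul_self, re_star_dotProduct_self, re_star_dotProduct_self,
    Finset.sum_mul]
  exact Finset.sum_le_sum fun i _ => norm_dotProduct_sq_le (B i) w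

lemma star_smul_dotProduct_mulVec_smul (Q : Matrix ι ι 𝕜) (c : 𝕜) (w : ι → 𝕜) :
    star (c • w) ⬝ᵥ Q *ᵥ (c • w) = (‖c‖ ^ 2 : 𝕜) * (star w ⬝ᵥ Q *ᵥ w) := by
  rw [star_smul, mulVec_smul, smul_dotProduct, dotProduct_smul, smul_smul, smul_eq_mul,
    RCLike.star_def, RCLike.conj_mul]

lemma exists_ne_zero_star_dotProduct_eq_zero (hι : 1 < Fintype.card ι) (w : ι → 𝕜) :
    ∃ v ≠ 0, star v ⬝ᵥ w = 0 := by
  have hker : LinearMap.ker (dotProductBilin 𝕜 𝕜 (star w)) ≠ ⊥ :=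
    LinearMap.ker_ne_bot_of_finrank_lt (by simpa using hι)
  obtain ⟨v, hv, hv0⟩ := (Submodule.ne_bot_iff _).mp hker
  have hwv : star w ⬝ᵥ v = 0 := by simpa using hv
  exact ⟨v, hv0, by rw [star_dotProduct, hwv, star_zero]⟩

/-- Orthogonal projection onto the span of `v` (the zero matrix when `v = 0`, as `0⁻¹ = 0`). -/
def lineProjection (v : ι → 𝕜) : Matrix ι ι 𝕜 := (star v ⬝ᵥ v)⁻¹ • vecMulVec v (star v)

lemma posSemidef_lineProjection (v : ι → 𝕜) : (lineProjection v).PosSemidef :=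
  (posSemidef_vecMulVec_self_star v).smul (inv_nonneg.mpr (dotProduct_star_self_nonneg v))

lemma trace_lineProjection {v : ι → 𝕜} (hv : v ≠ 0) : (lineProjection v).trace = 1 := by
  rw [lineProjection, trace_smul, trace_vecMulVec, dotProduct_comm v, smul_eq_mul,
    inv_mul_cancel₀ (dotProduct_star_self_eq_zero.not.mpr hv)]

lemma lineProjection_mulVec (v w : ι → 𝕜) :
    lineProjection v *ᵥ w = ((star v ⬝ᵥ v)⁻¹ * (star v ⬝ᵥ w)) • v := by
  rw [lineProjection, smul_mulVec, vecMulVec_mulVec, op_smul_eq_smul, smul_smul]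

lemma lineProjection_mulVec_self {v : ι → 𝕜} (hv : v ≠ 0) : lineProjection v *ᵥ v = v := by
  rw [lineProjection_mulVec, inv_mul_cancel₀ (dotProduct_star_self_eq_zero.not.mpr hv), one_smul]

lemma lineProjection_mulVec_of_star_dotProduct_eq_zero {v w : ι → 𝕜} (h : star v ⬝ᵥ w = 0) :
    lineProjection v *ᵥ w = 0 := by
  rw [lineProjection_mulVec, h, mul_zero, zero_smul]

end Matrix

section SecrecyRate

open Real

/-- With `h_R = ξ h_E`, the secrecy rate of `Q` is `secrecyRate ρ ‖ξ‖² (h_E† Q h_E)`. -/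
noncomputable def secrecyRate (ρ a s : ℝ) : ℝ := log (1 + ρ * (a * s)) - log (1 + ρ * s)

variable {ρ a s t : ℝ}

lemma secrecyRate_zero_right (ρ a : ℝ) : secrecyRate ρ a 0 = 0 := by simp [secrecyRate]

lemma secrecyRate_nonpos (hρ : 0 ≤ ρ) (ha₀ : 0 ≤ a) (ha₁ : a ≤ 1) (hs : 0 ≤ s) :
    secrecyRate ρ a s ≤ 0 :=
  sub_nonpos.mpr <| log_le_log (by positivity) <| by gcongr; exact mul_le_of_le_one_left hs ha₁

lemma secrecyRate_le_secrecyRate (hρ : 0 ≤ ρ) (ha : 1 ≤ a) (hs : 0 ≤ s) (hst : s ≤ t) :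
    secrecyRate ρ a s ≤ secrecyRate ρ a t := by
  have ht : 0 ≤ t := hs.trans hst
  have ha₀ : 0 ≤ a := zero_le_one.trans ha
  rw [secrecyRate, secrecyRate, sub_le_sub_iff, ← log_mul (by positivity) (by positivity),
    ← log_mul (by positivity) (by positivity)]
  refine log_le_log (by positivity) ?_
  nlinarith [mul_nonneg hρ (mul_nonneg (sub_nonneg.mpr ha) (sub_nonneg.mpr hst))]

lemma secrecyRate_eq_log_div (hρ : 0 ≤ ρ) (ha : 0 ≤ a) (hs : 0 ≤ s) :
    secrecyRate ρ a s = log ((1 + ρ * a * s) / (1 + ρ * s)) := by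
  rw [secrecyRate, log_div (by positivity) (by positivity), mul_assoc]

lemma secrecyRate_pos (hρ : 0 < ρ) (ha : 1 < a) (hs : 0 < s) : 0 < secrecyRate ρ a s := by
  refine sub_pos.mpr <| log_lt_log (by positivity) ?_
  nlinarith [mul_pos hρ (mul_pos (sub_pos.mpr ha) hs)]

end SecrecyRate

/-- In the MISO wiretap channel with `h_R = ξ h_E`, `h_E ≠ 0`:
(a) if `|ξ| < 1` and `n_T ≥ 2`, the secrecy capacity is zero;
(b) if `|ξ| > 1`, the secrecy capacity equals
`log((1 + ρ|ξ|²‖h_E‖²)/(1 + ρ‖h_E‖²)) > 0`, attained at `Q = h_E h_E†/‖h_E‖²`. -/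
theorem stmt_5 (nT : ℕ) (hE : Fin nT → ℂ) (hEne : hE ≠ 0) (ξ : ℂ) (ρ : ℝ) (hρ : 0 < ρ) :
    (‖ξ‖ < 1 → 2 ≤ nT →
      sSup {x : ℝ | ∃ Q : Matrix (Fin nT) (Fin nT) ℂ, Q.PosSemidef ∧ Q.trace = 1 ∧
          x = Real.log (1 + ρ * (star (ξ • hE) ⬝ᵥ (Q *ᵥ (ξ • hE))).re)
            - Real.log (1 + ρ * (star hE ⬝ᵥ (Q *ᵥ hE)).re)} = 0) ∧
    (1 < ‖ξ‖ →
      sSup {x : ℝ | ∃ Q : Matrix (Fin nT) (Fin nT) ℂ, Q.PosSemidef ∧ Q.trace = 1 ∧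
          x = Real.log (1 + ρ * (star (ξ • hE) ⬝ᵥ (Q *ᵥ (ξ • hE))).re)
            - Real.log (1 + ρ * (star hE ⬝ᵥ (Q *ᵥ hE)).re)}
        = Real.log ((1 + ρ * ‖ξ‖ ^ 2 * (star hE ⬝ᵥ hE).re)
            / (1 + ρ * (star hE ⬝ᵥ hE).re)) ∧
      0 < Real.log ((1 + ρ * ‖ξ‖ ^ 2 * (star hE ⬝ᵥ hE).re)
            / (1 + ρ * (star hE ⬝ᵥ hE).re)) ∧
      ((star hE ⬝ᵥ hE)⁻¹ • vecMulVec hE (star hE)).PosSemidef ∧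
      ((star hE ⬝ᵥ hE)⁻¹ • vecMulVec hE (star hE)).trace = 1 ∧
      Real.log (1 + ρ * (star (ξ • hE) ⬝ᵥ
            (((star hE ⬝ᵥ hE)⁻¹ • vecMulVec hE (star hE)) *ᵥ (ξ • hE))).re)
        - Real.log (1 + ρ * (star hE ⬝ᵥ
            (((star hE ⬝ᵥ hE)⁻¹ • vecMulVec hE (star hE)) *ᵥ hE)).re)
        = Real.log ((1 + ρ * ‖ξ‖ ^ 2 * (star hE ⬝ᵥ hE).re)
            / (1 + ρ * (star hE ⬝ᵥ hE).re))) := by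
  have hrate (Q : Matrix (Fin nT) (Fin nT) ℂ) :
      Real.log (1 + ρ * (star (ξ • hE) ⬝ᵥ (Q *ᵥ (ξ • hE))).re)
          - Real.log (1 + ρ * (star hE ⬝ᵥ (Q *ᵥ hE)).re)
        = secrecyRate ρ (‖ξ‖ ^ 2) (star hE ⬝ᵥ Q *ᵥ hE).re := by
    rw [star_smul_dotProduct_mulVec_smul, ← RCLike.ofReal_pow, ← RCLike.re_to_complex,
      RCLike.re_ofReal_mul]
    rfl
  have hS : 0 < (star hE ⬝ᵥ hE).re := by
    simpa using (Complex.lt_def.mp (dotProduct_star_self_pos_iff.mpr hEne)).1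
  rw [← secrecyRate_eq_log_div hρ.le (by positivity) hS.le]
  simp only [hrate]
  refine ⟨fun hξ hn => ?_, fun hξ => ?_⟩
  · obtain ⟨v, hv, hvE⟩ := exists_ne_zero_star_dotProduct_eq_zero (by rw [Fintype.card_fin]; omega) hE
    refine IsGreatest.csSup_eq ⟨⟨lineProjection v, posSemidef_lineProjection v,
      trace_lineProjection hv, ?_⟩, ?_⟩
    · simp [lineProjection_mulVec_of_star_dotProduct_eq_zero hvE, secrecyRate_zero_right]
    · rintro _ ⟨Q, hQ, -, rfl⟩
      exact secrecyRate_nonpos hρ.le (by positivity) (pow_le_one₀ (norm_nonneg ξ) hξ.le)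
        (hQ.re_dotProduct_nonneg hE)
  · have ha : 1 < ‖ξ‖ ^ 2 := one_lt_pow₀ hξ two_ne_zero
    rw [show (star hE ⬝ᵥ hE)⁻¹ • vecMulVec hE (star hE) = lineProjection hE from rfl]
    have hP : lineProjection hE *ᵥ hE = hE := lineProjection_mulVec_self hEne
    refine ⟨IsGreatest.csSup_eq ⟨⟨lineProjection hE, posSemidef_lineProjection hE,
      trace_lineProjection hEne, by rw [hP]⟩, ?_⟩, secrecyRate_pos hρ ha hS,
      posSemidef_lineProjection hE, trace_lineProjection hEne, by rw [hP]⟩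
    rintro _ ⟨Q, hQ, hQ₁, rfl⟩
    refine secrecyRate_le_secrecyRate hρ.le ha.le (hQ.re_dotProduct_nonneg hE) ?_
    simpa [hQ₁] using hQ.re_dotProduct_mulVec_le hE
end

section
/- In the MISO wiretap channel, if h_R is not a scalar multiple of h_E (in particular h_R ≠ 0), then for every ρ > 0 the secrecy capacity is strictly positive: sup_{Q ∈ Ω} [log(1 + ρ h_R†Q h_R) − log(1 + ρ h_E†Q h_E)] > 0. -/
open Matrix
open scoped ComplexOrder

/-!
Projecting `h_R` away from `h_E` gives a direction `w` orthogonal to `h_E` but not to `h_R`. The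
rank-one covariance `Q = w w† / ‖w‖²` gives the eavesdropper rate zero and the receiver a positive
rate. The achievable rates are bounded above because `h† Q h ≤ Tr(Q) ‖h‖²` for `Q ⪰ 0`
(Cauchy–Schwarz on each term of a rank-one decomposition of `Q`), so their supremum is at least
that positive rate.
-/

namespace Matrix

theorem dotProduct_vecMulVec_mulVec {R n : Type*} [CommSemiring R] [Fintype n]
    (u v w x : n → R) : u ⬝ᵥ (vecMulVec v w *ᵥ x) = (u ⬝ᵥ v) * (w ⬝ᵥ x) := by
  rw [vecMulVec_mulVec, op_smul_eq_smul, dotProduct_smul, smul_eq_mul, mul_comm]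

variable {𝕜 n : Type*} [RCLike 𝕜] [Fintype n]

theorem re_dotProduct_mul_dotProduct_le (v x : n → 𝕜) :
    RCLike.re ((star x ⬝ᵥ v) * (star v ⬝ᵥ x)) ≤
      RCLike.re (star v ⬝ᵥ v) * RCLike.re (star x ⬝ᵥ x) := by
  have h := inner_mul_inner_self_le (𝕜 := 𝕜) (WithLp.toLp 2 v) (WithLp.toLp 2 x)
  simp only [EuclideanSpace.inner_toLp_toLp] at h
  rw [dotProduct_comm v (star v), dotProduct_comm x (star x), dotProduct_comm x (star v),
    dotProduct_comm v (star x)] at h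
  calc _ ≤ ‖(star x ⬝ᵥ v) * (star v ⬝ᵥ x)‖ := RCLike.re_le_norm _
    _ ≤ _ := by rw [norm_mul, mul_comm]; exact h

theorem PosSemidef.re_dotProduct_le {Q : Matrix n n 𝕜} (hQ : Q.PosSemidef) (x : n → 𝕜) :
    RCLike.re (star x ⬝ᵥ Q *ᵥ x) ≤ RCLike.re Q.trace * RCLike.re (star x ⬝ᵥ x) := by
  obtain ⟨m, v, rfl⟩ := posSemidef_iff_eq_sum_vecMulVec.mp hQ
  simp only [sum_mulVec, dotProduct_sum, trace_sum, trace_vecMulVec, map_sum, Finset.sum_mul,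
    dotProduct_vecMulVec_mulVec]
  gcongr with k
  rw [dotProduct_comm (v k) (star (v k))]
  exact re_dotProduct_mul_dotProduct_le (v k) x

theorem exists_dotProduct_eq_zero_ne_zero {u v : n → 𝕜} (h : ∀ c : 𝕜, u ≠ c • v) :
    ∃ w : n → 𝕜, star w ⬝ᵥ v = 0 ∧ star w ⬝ᵥ u ≠ 0 := by
  set c := (star v ⬝ᵥ u) / (star v ⬝ᵥ v)
  have hvw : star v ⬝ᵥ (u - c • v) = 0 := by
    rcases eq_or_ne v 0 with rfl | hv
    · simp
    rw [dotProduct_sub, dotProduct_smul, smul_eq_mul,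
      div_mul_cancel₀ _ (dotProduct_star_self_eq_zero.not.mpr hv), sub_self]
  have hwv : star (u - c • v) ⬝ᵥ v = 0 := by rw [star_dotProduct, hvw, star_zero]
  refine ⟨u - c • v, hwv, fun hwu => ?_⟩
  have hw : star (u - c • v) ⬝ᵥ (u - c • v) = 0 := by
    rw [dotProduct_sub, dotProduct_smul, hwu, hwv, smul_zero, sub_zero]
  exact h c (sub_eq_zero.mp (dotProduct_star_self_eq_zero.mp hw))

theorem exists_posSemidef_trace_eq_one_separating {u v : n → 𝕜} (h : ∀ c : 𝕜, u ≠ c • v) :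
    ∃ Q : Matrix n n 𝕜, Q.PosSemidef ∧ Q.trace = 1 ∧
      star v ⬝ᵥ Q *ᵥ v = 0 ∧ 0 < star u ⬝ᵥ Q *ᵥ u := by
  obtain ⟨w, hwv, hwu⟩ := exists_dotProduct_eq_zero_ne_zero h
  have hw : 0 < star w ⬝ᵥ w := dotProduct_star_self_pos_iff.mpr (by rintro rfl; simp at hwu)
  refine ⟨(star w ⬝ᵥ w)⁻¹ • vecMulVec w (star w), (posSemidef_vecMulVec_self_star w).smul
    (RCLike.inv_pos_of_pos hw).le, ?_, ?_, ?_⟩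
  · rw [trace_smul, trace_vecMulVec, dotProduct_comm w, smul_eq_mul, inv_mul_cancel₀ hw.ne']
  · rw [smul_mulVec, dotProduct_smul, dotProduct_vecMulVec_mulVec, hwv, mul_zero, smul_zero]
  · rw [smul_mulVec, dotProduct_smul, dotProduct_vecMulVec_mulVec, star_dotProduct u, smul_eq_mul,
      RCLike.star_def, RCLike.conj_mul]
    exact mul_pos (RCLike.inv_pos_of_pos hw) (by exact_mod_cast pow_pos (norm_pos_iff.mpr hwu) 2)

end Matrix

theorem stmt_6_general (nT : ℕ) (hR hE : Fin nT → ℂ)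
    (hind : ∀ c : ℂ, hR ≠ c • hE) (ρ : ℝ) (hρ : 0 < ρ) :
    0 < sSup {x : ℝ | ∃ Q : Matrix (Fin nT) (Fin nT) ℂ, Q.PosSemidef ∧ Q.trace = 1 ∧
        x = Real.log (1 + ρ * (star hR ⬝ᵥ (Q *ᵥ hR)).re)
          - Real.log (1 + ρ * (star hE ⬝ᵥ (Q *ᵥ hE)).re)} := by
  obtain ⟨Q₀, hQ₀, hQ₀_trace, hE_Q₀, hR_Q₀⟩ := exists_posSemidef_trace_eq_one_separating hind
  refine lt_csSup_of_lt ⟨Real.log (1 + ρ * (star hR ⬝ᵥ hR).re), ?_⟩ ⟨Q₀, hQ₀, hQ₀_trace, rfl⟩ ?_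
  · rintro _ ⟨Q, hQ, hQ_trace, rfl⟩
    have hR_le : (star hR ⬝ᵥ Q *ᵥ hR).re ≤ (star hR ⬝ᵥ hR).re := by
      simpa [hQ_trace] using hQ.re_dotProduct_le hR
    have hR_nonneg : 0 ≤ (star hR ⬝ᵥ Q *ᵥ hR).re := hQ.re_dotProduct_nonneg hR
    have hE_nonneg : 0 ≤ (star hE ⬝ᵥ Q *ᵥ hE).re := hQ.re_dotProduct_nonneg hE
    calc _ ≤ Real.log (1 + ρ * (star hR ⬝ᵥ Q *ᵥ hR).re) :=
          sub_le_self _ (Real.log_nonneg (by nlinarith))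
      _ ≤ _ := Real.log_le_log (by positivity) (by gcongr)
  · have hR_pos : 0 < (star hR ⬝ᵥ Q₀ *ᵥ hR).re := (Complex.pos_iff.mp hR_Q₀).1
    rw [hE_Q₀, Complex.zero_re, mul_zero, add_zero, Real.log_one, sub_zero]
    exact Real.log_pos (by nlinarith)

/-- In the MISO wiretap channel, if `h_R` is not a scalar multiple
of `h_E`, then for every `ρ > 0` the secrecy capacity is strictly positive. -/
theorem stmt_6 (nT : ℕ) (hR hE : Fin nT → ℂ) (hEne : hE ≠ 0)
    (hind : ∀ c : ℂ, hR ≠ c • hE) (ρ : ℝ) (hρ : 0 < ρ) :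
    0 < sSup {x : ℝ | ∃ Q : Matrix (Fin nT) (Fin nT) ℂ, Q.PosSemidef ∧ Q.trace = 1 ∧
        x = Real.log (1 + ρ * (star hR ⬝ᵥ (Q *ᵥ hR)).re)
          - Real.log (1 + ρ * (star hE ⬝ᵥ (Q *ᵥ hE)).re)} :=
  stmt_6_general nT hR hE hind ρ hρ
end

section
/- In the MISO wiretap channel, assume h_E ≠ 0 and h_R is not a scalar multiple of h_E. Let C_s(ρ) = sup_{Q ∈ Ω} [log(1 + ρ h_R†Q h_R) − log(1 + ρ h_E†Q h_E)]. Then lim_{ρ→∞} (C_s(ρ) − log ρ) = log(‖h_R‖² − |h_R†h_E|²/‖h_E‖²), where the argument of the logarithm is strictly positive; consequently the secrecy degree of freedom lim_{ρ→∞} C_s(ρ)/log ρ equals 1. -/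
open Matrix Filter Topology WithLp
open scoped ComplexOrder

/-!
Write `h_R = c • h_E + g` with `g` orthogonal to `h_E`; then `‖g‖²` is exactly
`‖h_R‖² - |h_R†h_E|² / ‖h_E‖²`, positive because `h_R` is not a multiple of `h_E`.
Beamforming along `g`, i.e. `Q = g g† / ‖g‖²`, hides the signal from the eavesdropper and
achieves the rate `log (1 + ρ ‖g‖²)`. Conversely, writing `Q = B†B`, the triangle inequality for
`B h_R = c • B h_E + B g` together with `‖B g‖² ≤ tr Q ‖g‖²` gives
`h_R†Q h_R ≤ (1 + δ) ‖g‖² + (1 + δ⁻¹) |c|² h_E†Q h_E`, so every rate is at most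
`log (1 + ρ (1 + δ) ‖g‖² + (1 + δ⁻¹) |c|²)`. With `δ = ρ^(-1/2)` both bounds are
`log ρ + log ‖g‖² + o(1)`.
-/

lemma add_sq_le_one_add_inv_mul_add_one_add_mul {p q δ : ℝ} (hδ : 0 < δ) :
    (p + q) ^ 2 ≤ (1 + δ⁻¹) * p ^ 2 + (1 + δ) * q ^ 2 := by
  have hgap : (1 + δ⁻¹) * p ^ 2 + (1 + δ) * q ^ 2 - (p + q) ^ 2 = (p - δ * q) ^ 2 / δ := by
    field_simp; ring
  have : 0 ≤ (p - δ * q) ^ 2 / δ := by positivity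
  linarith

lemma log_one_add_mul_sub_log_one_add_mul_le {ρ a b u v : ℝ} (hρ : 0 ≤ ρ) (ha : 0 ≤ a)
    (hb : 0 ≤ b) (hu : 0 ≤ u) (hv : 0 ≤ v) (hab : a ≤ u + v * b) :
    Real.log (1 + ρ * a) - Real.log (1 + ρ * b) ≤ Real.log (1 + ρ * u + v) := by
  have hprod : 1 + ρ * a ≤ (1 + ρ * u + v) * (1 + ρ * b) := by
    nlinarith [mul_le_mul_of_nonneg_left hab hρ, mul_nonneg hρ hb, mul_nonneg hρ hu,
      mul_nonneg (mul_nonneg hρ hu) (mul_nonneg hρ hb), mul_nonneg hv (mul_nonneg hρ hb)]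
  have hlog := Real.log_le_log (by positivity) hprod
  rw [Real.log_mul (by positivity) (by positivity)] at hlog
  linarith

lemma tendsto_log_sub_log_of_tendsto_div {f : ℝ → ℝ} {L : ℝ} (hL : 0 < L)
    (hf : Tendsto (fun ρ => f ρ / ρ) atTop (𝓝 L)) :
    Tendsto (fun ρ => Real.log (f ρ) - Real.log ρ) atTop (𝓝 (Real.log L)) := by
  have hfpos : ∀ᶠ ρ in atTop, 0 < f ρ := by
    filter_upwards [hf.eventually (lt_mem_nhds hL), eventually_gt_atTop 0] with ρ h hρ
    exact (div_pos_iff_of_pos_right hρ).mp h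
  refine ((Real.continuousAt_log hL.ne').tendsto.comp hf).congr' ?_
  filter_upwards [hfpos, eventually_gt_atTop 0] with ρ h hρ
  exact Real.log_div h.ne' hρ.ne'

lemma tendsto_div_log_of_tendsto_sub_log {f : ℝ → ℝ} {L : ℝ}
    (hf : Tendsto (fun ρ => f ρ - Real.log ρ) atTop (𝓝 L)) :
    Tendsto (fun ρ => f ρ / Real.log ρ) atTop (𝓝 1) := by
  have h := (hf.mul Real.tendsto_log_atTop.inv_tendsto_atTop).add_const 1
  rw [mul_zero, zero_add] at h
  refine h.congr' ?_
  filter_upwards [eventually_gt_atTop 1] with ρ hρ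
  have hlog : Real.log ρ ≠ 0 := (Real.log_pos hρ).ne'
  simp only [Pi.inv_apply]
  field_simp
  ring

lemma tendsto_one_add_mul_div (K : ℝ) : Tendsto (fun ρ => (1 + ρ * K) / ρ) atTop (𝓝 K) := by
  have h := (tendsto_inv_atTop_zero (𝕜 := ℝ)).add_const K
  rw [zero_add] at h
  refine h.congr' ?_
  filter_upwards [eventually_gt_atTop 0] with ρ hρ
  field_simp

lemma tendsto_one_add_mul_add_div (K A : ℝ) :
    Tendsto (fun ρ => (1 + ρ * ((1 + (√ρ)⁻¹) * K) + (1 + √ρ) * A) / ρ) atTop (𝓝 K) := by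
  have hinv : Tendsto (fun ρ : ℝ => ρ⁻¹) atTop (𝓝 0) := tendsto_inv_atTop_zero
  have hsqrt : Tendsto (fun ρ : ℝ => (√ρ)⁻¹) atTop (𝓝 0) :=
    tendsto_inv_atTop_zero.comp Real.tendsto_sqrt_atTop
  have h := ((hinv.mul_const (1 + A)).add (hsqrt.mul_const (K + A))).const_add K
  rw [zero_mul, zero_mul, add_zero, add_zero] at h
  refine h.congr' ?_
  filter_upwards [eventually_gt_atTop 0] with ρ hρ
  have hs : 0 < √ρ := Real.sqrt_pos.mpr hρ
  set s := √ρ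
  rw [show ρ = s ^ 2 from (Real.sq_sqrt hρ.le).symm]
  field_simp
  ring

section InnerProductSpace

variable {𝕜 E : Type*} [RCLike 𝕜] [NormedAddCommGroup E] [InnerProductSpace 𝕜 E]

lemma exists_eq_smul_add_inner_eq_zero (x : E) {y : E} (hy : y ≠ 0) :
    ∃ (c : 𝕜) (g : E), x = c • y + g ∧ inner 𝕜 g y = 0 ∧
      ‖g‖ ^ 2 = ‖x‖ ^ 2 - ‖inner 𝕜 x y‖ ^ 2 / ‖y‖ ^ 2 := by
  have hy' : (‖y‖ : 𝕜) ≠ 0 := by simpa using hy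
  set c : 𝕜 := inner 𝕜 y x / (‖y‖ : 𝕜) ^ 2
  have horth : inner 𝕜 (x - c • y) y = 0 := by
    rw [inner_sub_left, inner_smul_left, inner_self_eq_norm_sq_to_K, ← inner_conj_symm]
    simp only [c, map_div₀, map_pow, RCLike.conj_ofReal]
    field_simp
    ring
  refine ⟨c, x - c • y, by abel, horth, ?_⟩
  have hpyth := norm_add_sq_eq_norm_sq_add_norm_sq_of_inner_eq_zero (x - c • y) (c • y)
    (by rw [inner_smul_right, horth, mul_zero])
  have hcy : ‖c • y‖ ^ 2 = ‖inner 𝕜 x y‖ ^ 2 / ‖y‖ ^ 2 := by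
    rw [norm_smul, norm_div, norm_pow, RCLike.norm_ofReal, abs_norm, ← inner_conj_symm,
      RCLike.norm_conj]
    field_simp
  rw [sub_add_cancel, ← sq, ← sq, ← sq, hcy] at hpyth
  linarith

end InnerProductSpace

namespace Matrix

variable {𝕜 : Type*} [RCLike 𝕜] {m n : Type*} [Fintype m] [Fintype n]

lemma star_dotProduct_self_eq (x : n → 𝕜) : star x ⬝ᵥ x = ((‖toLp 2 x‖ ^ 2 : ℝ) : 𝕜) := by
  rw [dotProduct_comm, ← EuclideanSpace.inner_toLp_toLp, inner_self_eq_norm_sq_to_K]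
  push_cast; rfl

lemma re_star_dotProduct_self_s7 (x : n → 𝕜) : RCLike.re (star x ⬝ᵥ x) = ‖toLp 2 x‖ ^ 2 := by
  rw [star_dotProduct_self_eq, RCLike.ofReal_re]

lemma star_dotProduct_conjTranspose_mul_self_mulVec (B : Matrix m n 𝕜) (x : n → 𝕜) :
    star x ⬝ᵥ ((Bᴴ * B) *ᵥ x) = star (B *ᵥ x) ⬝ᵥ (B *ᵥ x) := by
  rw [← mulVec_mulVec, dotProduct_mulVec, ← star_mulVec]

lemma norm_toLp_mulVec_sq_le (B : Matrix m n 𝕜) (x : n → 𝕜) :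
    ‖toLp 2 (B *ᵥ x)‖ ^ 2 ≤ RCLike.re (Bᴴ * B).trace * ‖toLp 2 x‖ ^ 2 := by
  have hrow (i : m) : ‖(B *ᵥ x) i‖ ^ 2 ≤ ‖toLp 2 (star (B i))‖ ^ 2 * ‖toLp 2 x‖ ^ 2 := by
    have : (B *ᵥ x) i = inner 𝕜 (toLp 2 (star (B i))) (toLp 2 x) := by
      rw [EuclideanSpace.inner_toLp_toLp, star_star, dotProduct_comm]; rfl
    rw [this, ← mul_pow]
    exact pow_le_pow_left₀ (norm_nonneg _) (norm_inner_le_norm _ _) 2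
  have htrace : RCLike.re (Bᴴ * B).trace = ∑ i, ‖toLp 2 (star (B i))‖ ^ 2 := by
    rw [← star_vec_dotProduct_vec, re_star_dotProduct_self_s7, EuclideanSpace.norm_sq_eq,
      Fintype.sum_prod_type_right]
    simp only [vec, EuclideanSpace.norm_sq_eq, Pi.star_apply, RCLike.star_def, RCLike.norm_conj]
  rw [htrace, Finset.sum_mul, EuclideanSpace.norm_sq_eq]
  exact Finset.sum_le_sum fun i _ => hrow i

lemma PosSemidef.re_dotProduct_mulVec_smul_add_le {Q : Matrix n n 𝕜} (hQ : Q.PosSemidef)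
    (c : 𝕜) (y z : n → 𝕜) {δ : ℝ} (hδ : 0 < δ) :
    RCLike.re (star (c • y + z) ⬝ᵥ (Q *ᵥ (c • y + z))) ≤
      (1 + δ⁻¹) * ‖c‖ ^ 2 * RCLike.re (star y ⬝ᵥ (Q *ᵥ y)) +
        (1 + δ) * RCLike.re Q.trace * ‖toLp 2 z‖ ^ 2 := by
  classical
  open scoped MatrixOrder in
  obtain ⟨B, rfl⟩ := CStarAlgebra.nonneg_iff_eq_star_mul_self.mp hQ.nonneg
  simp only [star_eq_conjTranspose, star_dotProduct_conjTranspose_mul_self_mulVec,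
    re_star_dotProduct_self_s7]
  have htri : ‖toLp 2 (B *ᵥ (c • y + z))‖ ≤ ‖c‖ * ‖toLp 2 (B *ᵥ y)‖ + ‖toLp 2 (B *ᵥ z)‖ := by
    rw [mulVec_add, mulVec_smul, toLp_add, toLp_smul, ← norm_smul]
    exact norm_add_le _ _
  calc ‖toLp 2 (B *ᵥ (c • y + z))‖ ^ 2
      ≤ (‖c‖ * ‖toLp 2 (B *ᵥ y)‖ + ‖toLp 2 (B *ᵥ z)‖) ^ 2 :=
        pow_le_pow_left₀ (norm_nonneg _) htri 2
    _ ≤ (1 + δ⁻¹) * (‖c‖ * ‖toLp 2 (B *ᵥ y)‖) ^ 2 + (1 + δ) * ‖toLp 2 (B *ᵥ z)‖ ^ 2 :=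
        add_sq_le_one_add_inv_mul_add_one_add_mul hδ
    _ ≤ _ := by
      rw [mul_pow, ← mul_assoc, mul_assoc (1 + δ)]
      gcongr
      exact norm_toLp_mulVec_sq_le B z

lemma exists_eq_smul_add_star_dotProduct_eq_zero (x : n → 𝕜) {y : n → 𝕜} (hy : y ≠ 0) :
    ∃ (c : 𝕜) (g : n → 𝕜), x = c • y + g ∧ star g ⬝ᵥ y = 0 ∧
      ‖toLp 2 g‖ ^ 2 = RCLike.re (star x ⬝ᵥ x) - ‖star x ⬝ᵥ y‖ ^ 2 / RCLike.re (star y ⬝ᵥ y) := by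
  obtain ⟨c, g, hx, horth, hg⟩ :=
    exists_eq_smul_add_inner_eq_zero (𝕜 := 𝕜) (toLp 2 x) (y := toLp 2 y) (by simpa using hy)
  refine ⟨c, ofLp g, by simpa using congrArg ofLp hx, ?_, ?_⟩
  · rwa [EuclideanSpace.inner_eq_star_dotProduct, dotProduct_comm] at horth
  · rw [re_star_dotProduct_self_s7, re_star_dotProduct_self_s7, toLp_ofLp, hg,
      EuclideanSpace.inner_toLp_toLp, dotProduct_comm]

lemma exists_posSemidef_trace_eq_one_re_dotProduct_mulVec {g : n → 𝕜} (hg : g ≠ 0) :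
    ∃ Q : Matrix n n 𝕜, Q.PosSemidef ∧ Q.trace = 1 ∧
      ∀ x, RCLike.re (star x ⬝ᵥ (Q *ᵥ x)) = ‖star g ⬝ᵥ x‖ ^ 2 / ‖toLp 2 g‖ ^ 2 := by
  have hg' : ‖toLp 2 g‖ ≠ 0 := by simpa using hg
  refine ⟨((‖toLp 2 g‖ ^ 2)⁻¹ : ℝ) • vecMulVec g (star g), ?_, ?_, fun x => ?_⟩
  · exact (posSemidef_vecMulVec_self_star g).smul (by positivity)
  · rw [trace_smul, trace_vecMulVec, dotProduct_comm, star_dotProduct_self_eq,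
      RCLike.real_smul_eq_coe_mul, ← RCLike.ofReal_mul, inv_mul_cancel₀ (by positivity),
      RCLike.ofReal_one]
  · rw [smul_mulVec, vecMulVec_mulVec, op_smul_eq_smul, dotProduct_smul, dotProduct_smul,
      star_dotProduct x g, smul_eq_mul, RCLike.star_def, RCLike.mul_conj,
      RCLike.real_smul_eq_coe_mul, ← RCLike.ofReal_pow, ← RCLike.ofReal_mul, RCLike.ofReal_re]
    ring

end Matrix

namespace MISOWiretap

variable {ι : Type*} [Fintype ι]

noncomputable def secrecyRate (hR hE : ι → ℂ) (ρ : ℝ) (Q : Matrix ι ι ℂ) : ℝ :=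
  Real.log (1 + ρ * (star hR ⬝ᵥ (Q *ᵥ hR)).re) - Real.log (1 + ρ * (star hE ⬝ᵥ (Q *ᵥ hE)).re)

def secrecyRates (hR hE : ι → ℂ) (ρ : ℝ) : Set ℝ :=
  {x : ℝ | ∃ Q : Matrix ι ι ℂ, Q.PosSemidef ∧ Q.trace = 1 ∧ x = secrecyRate hR hE ρ Q}

noncomputable def secrecyCapacity (hR hE : ι → ℂ) (ρ : ℝ) : ℝ :=
  sSup (secrecyRates hR hE ρ)

variable {hR hE g : ι → ℂ} {c : ℂ}

lemma secrecyRate_le (hdecomp : hR = c • hE + g) {Q : Matrix ι ι ℂ} (hQ : Q.PosSemidef)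
    (htr : Q.trace = 1) {ρ δ : ℝ} (hρ : 0 ≤ ρ) (hδ : 0 < δ) :
    secrecyRate hR hE ρ Q ≤
      Real.log (1 + ρ * ((1 + δ) * ‖toLp 2 g‖ ^ 2) + (1 + δ⁻¹) * ‖c‖ ^ 2) := by
  have hbound := hQ.re_dotProduct_mulVec_smul_add_le c hE g hδ
  rw [← hdecomp, htr, RCLike.one_re, mul_one, RCLike.re_to_complex, RCLike.re_to_complex]
    at hbound
  exact log_one_add_mul_sub_log_one_add_mul_le hρ (hQ.re_dotProduct_nonneg hR)
    (hQ.re_dotProduct_nonneg hE) (by positivity) (by positivity) (by linarith)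

lemma exists_secrecyRate_eq (hdecomp : hR = c • hE + g) (horth : star g ⬝ᵥ hE = 0)
    (hg : g ≠ 0) (ρ : ℝ) : ∃ Q : Matrix ι ι ℂ, Q.PosSemidef ∧ Q.trace = 1 ∧
      secrecyRate hR hE ρ Q = Real.log (1 + ρ * ‖toLp 2 g‖ ^ 2) := by
  obtain ⟨Q, hQ, htr, hform⟩ := exists_posSemidef_trace_eq_one_re_dotProduct_mulVec hg
  have hgR : ‖star g ⬝ᵥ hR‖ = ‖toLp 2 g‖ ^ 2 := by
    rw [hdecomp, dotProduct_add, dotProduct_smul, horth, smul_zero, zero_add,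
      star_dotProduct_self_eq, RCLike.norm_ofReal, abs_of_nonneg (by positivity)]
  have hg' : ‖toLp 2 g‖ ≠ 0 := by simpa using hg
  have hK : (‖toLp 2 g‖ ^ 2) ^ 2 / ‖toLp 2 g‖ ^ 2 = ‖toLp 2 g‖ ^ 2 := by field_simp
  refine ⟨Q, hQ, htr, ?_⟩
  rw [secrecyRate, ← RCLike.re_to_complex, ← RCLike.re_to_complex, hform, hform, hgR, horth,
    norm_zero, hK, zero_pow two_ne_zero, zero_div, mul_zero, add_zero, Real.log_one, sub_zero]

lemma bddAbove_secrecyRates (hdecomp : hR = c • hE + g) {ρ : ℝ} (hρ : 0 ≤ ρ) :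
    BddAbove (secrecyRates hR hE ρ) := by
  refine ⟨Real.log (1 + ρ * ((1 + 1) * ‖toLp 2 g‖ ^ 2) + (1 + 1⁻¹) * ‖c‖ ^ 2), ?_⟩
  rintro x ⟨Q, hQ, htr, rfl⟩
  exact secrecyRate_le hdecomp hQ htr hρ one_pos

lemma log_one_add_mul_le_secrecyCapacity (hdecomp : hR = c • hE + g)
    (horth : star g ⬝ᵥ hE = 0) (hg : g ≠ 0) {ρ : ℝ} (hρ : 0 ≤ ρ) :
    Real.log (1 + ρ * ‖toLp 2 g‖ ^ 2) ≤ secrecyCapacity hR hE ρ := by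
  obtain ⟨Q, hQ, htr, hrate⟩ := exists_secrecyRate_eq hdecomp horth hg ρ
  exact le_csSup (bddAbove_secrecyRates hdecomp hρ) ⟨Q, hQ, htr, hrate.symm⟩

lemma secrecyCapacity_le (hdecomp : hR = c • hE + g) {ρ δ : ℝ} (hρ : 0 ≤ ρ) (hδ : 0 < δ) :
    secrecyCapacity hR hE ρ ≤
      Real.log (1 + ρ * ((1 + δ) * ‖toLp 2 g‖ ^ 2) + (1 + δ⁻¹) * ‖c‖ ^ 2) := by
  have hpos : 0 ≤ ρ * ((1 + δ) * ‖toLp 2 g‖ ^ 2) + (1 + δ⁻¹) * ‖c‖ ^ 2 := by positivity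
  refine Real.sSup_le ?_ (Real.log_nonneg (by linarith))
  rintro x ⟨Q, hQ, htr, rfl⟩
  exact secrecyRate_le hdecomp hQ htr hρ hδ

lemma tendsto_secrecyCapacity_sub_log (hdecomp : hR = c • hE + g) (horth : star g ⬝ᵥ hE = 0)
    (hg : g ≠ 0) :
    Tendsto (fun ρ => secrecyCapacity hR hE ρ - Real.log ρ) atTop
      (𝓝 (Real.log (‖toLp 2 g‖ ^ 2))) := by
  have hK : 0 < ‖toLp 2 g‖ ^ 2 := pow_pos (norm_pos_iff.mpr (by simpa using hg)) 2
  refine tendsto_of_tendsto_of_tendsto_of_le_of_le'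
    (tendsto_log_sub_log_of_tendsto_div hK (tendsto_one_add_mul_div _))
    (tendsto_log_sub_log_of_tendsto_div hK (tendsto_one_add_mul_add_div _ (‖c‖ ^ 2))) ?_ ?_
  · filter_upwards [eventually_ge_atTop 0] with ρ hρ
    linarith [log_one_add_mul_le_secrecyCapacity hdecomp horth hg hρ]
  · filter_upwards [eventually_gt_atTop 0] with ρ hρ
    have h := secrecyCapacity_le hdecomp hρ.le (δ := (√ρ)⁻¹) (by positivity)
    rw [inv_inv] at h
    linarith

end MISOWiretap

/-- In the MISO wiretap channel with `h_E ≠ 0` and `h_R` not a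
scalar multiple of `h_E`, the secrecy capacity `C_s(ρ)` satisfies
`C_s(ρ) − log ρ → log(‖h_R‖² − |h_R†h_E|²/‖h_E‖²)` as `ρ → ∞` (the argument of
the logarithm being strictly positive), and hence `C_s(ρ)/log ρ → 1`. -/
theorem stmt_7 (nT : ℕ) (hR hE : Fin nT → ℂ) (hEne : hE ≠ 0)
    (hind : ∀ c : ℂ, hR ≠ c • hE) :
    0 < (star hR ⬝ᵥ hR).re - ‖star hR ⬝ᵥ hE‖ ^ 2 / (star hE ⬝ᵥ hE).re ∧
    Filter.Tendsto (fun ρ : ℝ =>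
        sSup {x : ℝ | ∃ Q : Matrix (Fin nT) (Fin nT) ℂ, Q.PosSemidef ∧ Q.trace = 1 ∧
            x = Real.log (1 + ρ * (star hR ⬝ᵥ (Q *ᵥ hR)).re)
              - Real.log (1 + ρ * (star hE ⬝ᵥ (Q *ᵥ hE)).re)} - Real.log ρ)
      Filter.atTop
      (nhds (Real.log ((star hR ⬝ᵥ hR).re
          - ‖star hR ⬝ᵥ hE‖ ^ 2 / (star hE ⬝ᵥ hE).re))) ∧
    Filter.Tendsto (fun ρ : ℝ =>
        sSup {x : ℝ | ∃ Q : Matrix (Fin nT) (Fin nT) ℂ, Q.PosSemidef ∧ Q.trace = 1 ∧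
            x = Real.log (1 + ρ * (star hR ⬝ᵥ (Q *ᵥ hR)).re)
              - Real.log (1 + ρ * (star hE ⬝ᵥ (Q *ᵥ hE)).re)} / Real.log ρ)
      Filter.atTop (nhds 1) := by
  obtain ⟨c, g, hdecomp, horth, hK⟩ := exists_eq_smul_add_star_dotProduct_eq_zero hR hEne
  simp only [RCLike.re_to_complex] at hK
  have hg : g ≠ 0 := by
    rintro rfl
    exact hind c (by simpa using hdecomp)
  have hlim := MISOWiretap.tendsto_secrecyCapacity_sub_log hdecomp horth hg
  rw [← hK]
  exact ⟨pow_pos (norm_pos_iff.mpr (by simpa using hg)) 2, hlim,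
    tendsto_div_log_of_tendsto_sub_log hlim⟩
end

section
/- Let S_R and S_E be n_T×n_T Hermitian positive semidefinite matrices such that S_R − S_E has a positive eigenvalue. Then for every n_T×n_T Hermitian positive semidefinite matrix Q: (i) the matrices I + Q S_R and I + Q S_E are invertible and Θ(Q) = S_R(I + Q S_R)⁻¹ − S_E(I + Q S_E)⁻¹ is Hermitian with λ_max(Θ(Q)) > 0; (ii) Tr(Q Θ(Q)) ≤ Tr(Q) · λ_max(Θ(Q)); in particular, if Tr(Q) = 1 then Tr(Q Θ(Q)) ≤ λ_max(Θ(Q)). -/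
/-!
Writing `D = S_R - S_E`, the push-through identity `S (1 + Q S)⁻¹ = (1 + S Q)⁻¹ S` gives
`Θ = (1 + S_E Q)⁻¹ D (1 + Q S_R)⁻¹`, and hence the congruence
`(1 + Q S_R)ᴴ Θ (1 + Q S_R) = D + D P D` with `P = Q (1 + S_E Q)⁻¹` positive semidefinite.
At an eigenvector `v` of `D` with eigenvalue `t > 0` this form equals
`t ‖v‖² + (D v)ᴴ P (D v) > 0`, so `Θ` is not negative semidefinite and `λ_max(Θ) > 0`.
The trace bound is `Tr(Q (λ_max(Θ) I - Θ)) ≥ 0`, a trace of a product of two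
positive semidefinite matrices.
-/

open Matrix
open scoped ComplexOrder

/-- The largest eigenvalue of a (Hermitian) complex matrix, expressed as the
supremum of its real eigenvalues. -/
noncomputable def lamMax {n : ℕ} (A : Matrix (Fin n) (Fin n) ℂ) : ℝ :=
  sSup {t : ℝ | ∃ v : Fin n → ℂ, v ≠ 0 ∧ A *ᵥ v = (t : ℂ) • v}

open scoped MatrixOrder

namespace Matrix

section CommRing

variable {n α : Type*} [Fintype n] [DecidableEq n] [CommRing α]

/-- When `1 + Q S` is singular both sides vanish, since `det (1 + Q S) = det (1 + S Q)`. -/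
theorem mul_inv_one_add_mul_comm (S Q : Matrix n n α) :
    S * (1 + Q * S)⁻¹ = (1 + S * Q)⁻¹ * S := by
  by_cases h : IsUnit (1 + Q * S).det
  · have h' : IsUnit (1 + S * Q).det := by rwa [det_one_add_mul_comm]
    calc S * (1 + Q * S)⁻¹ = (1 + S * Q)⁻¹ * ((1 + S * Q) * S) * (1 + Q * S)⁻¹ := by
          rw [nonsing_inv_mul_cancel_left _ _ h']
      _ = (1 + S * Q)⁻¹ * S * ((1 + Q * S) * (1 + Q * S)⁻¹) := by noncomm_ring
      _ = (1 + S * Q)⁻¹ * S := by rw [mul_nonsing_inv _ h, Matrix.mul_one]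
  · have h' : ¬IsUnit (1 + S * Q).det := by rwa [det_one_add_mul_comm]
    rw [nonsing_inv_apply_not_isUnit _ h, nonsing_inv_apply_not_isUnit _ h', Matrix.mul_zero,
      Matrix.zero_mul]

theorem mul_inv_one_add_mul_sub_mul_inv_one_add_mul {Q A B : Matrix n n α}
    (hA : IsUnit (1 + Q * A)) (hB : IsUnit (1 + B * Q)) :
    A * (1 + Q * A)⁻¹ - B * (1 + Q * B)⁻¹ = (1 + B * Q)⁻¹ * (A - B) * (1 + Q * A)⁻¹ := by
  rw [isUnit_iff_isUnit_det] at hA hB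
  rw [mul_inv_one_add_mul_comm B]
  calc A * (1 + Q * A)⁻¹ - (1 + B * Q)⁻¹ * B
      = (1 + B * Q)⁻¹ * ((1 + B * Q) * A) * (1 + Q * A)⁻¹
        - (1 + B * Q)⁻¹ * (B * ((1 + Q * A) * (1 + Q * A)⁻¹)) := by
        rw [nonsing_inv_mul_cancel_left _ _ hB, mul_nonsing_inv _ hA, Matrix.mul_one]
    _ = (1 + B * Q)⁻¹ * (A - B) * (1 + Q * A)⁻¹ := by noncomm_ring

theorem one_add_mul_mul_sub_mul_one_add_mul {Q A B : Matrix n n α}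
    (hA : IsUnit (1 + Q * A)) (hB : IsUnit (1 + B * Q)) :
    (1 + A * Q) * (A * (1 + Q * A)⁻¹ - B * (1 + Q * B)⁻¹) * (1 + Q * A)
      = (A - B) + (A - B) * (Q * (1 + B * Q)⁻¹) * (A - B) := by
  rw [mul_inv_one_add_mul_sub_mul_inv_one_add_mul hA hB, Matrix.mul_assoc,
    nonsing_inv_mul_cancel_right _ _ ((isUnit_iff_isUnit_det _).mp hA)]
  calc (1 + A * Q) * ((1 + B * Q)⁻¹ * (A - B))
      = ((1 + B * Q) + (A - B) * Q) * (1 + B * Q)⁻¹ * (A - B) := by noncomm_ring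
    _ = (A - B) + (A - B) * (Q * (1 + B * Q)⁻¹) * (A - B) := by
        rw [Matrix.add_mul, mul_nonsing_inv _ ((isUnit_iff_isUnit_det _).mp hB)]
        noncomm_ring

end CommRing

section RCLike

variable {n 𝕜 : Type*} [Fintype n] [RCLike 𝕜]

theorem PosSemidef.trace_mul_nonneg {A B : Matrix n n 𝕜} (hA : A.PosSemidef)
    (hB : B.PosSemidef) : 0 ≤ (A * B).trace := by
  classical
  obtain ⟨C, rfl⟩ := CStarAlgebra.nonneg_iff_eq_star_mul_self.mp hA.nonneg
  rw [Matrix.mul_assoc, trace_mul_comm, Matrix.mul_assoc, ← Matrix.mul_assoc,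
    star_eq_conjTranspose]
  exact (hB.mul_mul_conjTranspose_same C).trace_nonneg

theorem IsHermitian.re_dotProduct_add_mul_mul_mulVec_pos {D P : Matrix n n 𝕜}
    (hD : D.IsHermitian) (hP : P.PosSemidef) {t : ℝ} {v : n → 𝕜} (ht : 0 < t) (hv : v ≠ 0)
    (hDv : D *ᵥ v = (t : 𝕜) • v) :
    0 < RCLike.re (star v ⬝ᵥ (D + D * P * D) *ᵥ v) := by
  have hform : star v ⬝ᵥ (D + D * P * D) *ᵥ v
      = t * (star v ⬝ᵥ v) + star (D *ᵥ v) ⬝ᵥ P *ᵥ (D *ᵥ v) := by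
    have hvD : star v ᵥ* D = star (D *ᵥ v) := by rw [star_mulVec, hD.eq]
    rw [add_mulVec, dotProduct_add, ← mulVec_mulVec, ← mulVec_mulVec,
      dotProduct_mulVec (star v) D (P *ᵥ (D *ᵥ v)), hvD, hDv, dotProduct_smul, smul_eq_mul]
  have hvv : 0 < RCLike.re (star v ⬝ᵥ v) :=
    (RCLike.pos_iff.mp (dotProduct_star_self_pos_iff.mpr hv)).1
  rw [hform, map_add, RCLike.re_ofReal_mul]
  exact add_pos_of_pos_of_nonneg (mul_pos ht hvv) (hP.re_dotProduct_nonneg _)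

variable [DecidableEq n]

theorem conjTranspose_one_add_mul {S Q : Matrix n n 𝕜} (hS : S.IsHermitian)
    (hQ : Q.IsHermitian) : (1 + Q * S)ᴴ = 1 + S * Q := by
  rw [conjTranspose_add, conjTranspose_one, conjTranspose_mul, hS.eq, hQ.eq]

theorem IsHermitian.mul_inv_one_add_mul {S Q : Matrix n n 𝕜} (hS : S.IsHermitian)
    (hQ : Q.IsHermitian) : (S * (1 + Q * S)⁻¹).IsHermitian := by
  rw [IsHermitian, conjTranspose_mul, conjTranspose_nonsing_inv, conjTranspose_one_add_mul hS hQ,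
    hS.eq, mul_inv_one_add_mul_comm]

/-- Writing `S = Bᴴ B`, `det (1 + Q Bᴴ B) = det (1 + B Q Bᴴ)` and `1 + B Q Bᴴ` is positive
definite. -/
theorem PosSemidef.isUnit_one_add_mul {Q S : Matrix n n 𝕜} (hQ : Q.PosSemidef)
    (hS : S.PosSemidef) : IsUnit (1 + Q * S) := by
  obtain ⟨B, rfl⟩ := CStarAlgebra.nonneg_iff_eq_star_mul_self.mp hS.nonneg
  rw [isUnit_iff_isUnit_det, ← Matrix.mul_assoc, det_one_add_mul_comm, ← Matrix.mul_assoc,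
    star_eq_conjTranspose]
  exact (PosDef.one.add_posSemidef (hQ.mul_mul_conjTranspose_same B)).det_pos.ne'.isUnit

/-- Congruence by `1 + Q S` turns `S (1 + Q S)⁻¹` into `S + S Q S`. -/
theorem PosSemidef.mul_inv_one_add_mul {S Q : Matrix n n 𝕜} (hS : S.PosSemidef)
    (hQ : Q.PosSemidef) : (S * (1 + Q * S)⁻¹).PosSemidef := by
  have hU := hQ.isUnit_one_add_mul hS
  rw [← hU.posSemidef_star_left_conjugate_iff, star_eq_conjTranspose,
    conjTranspose_one_add_mul hS.1 hQ.1, Matrix.mul_assoc, Matrix.mul_assoc,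
    nonsing_inv_mul _ ((isUnit_iff_isUnit_det _).mp hU), Matrix.mul_one, Matrix.add_mul,
    Matrix.one_mul]
  simpa only [hS.1.eq] using hS.add (hQ.conjTranspose_mul_mul_same S)

end RCLike

theorem mem_spectrum_real_iff_exists_mulVec_eq_smul {n : Type*} [Fintype n] [DecidableEq n]
    (A : Matrix n n ℂ) (t : ℝ) :
    t ∈ spectrum ℝ A ↔ ∃ v : n → ℂ, v ≠ 0 ∧ A *ᵥ v = (t : ℂ) • v := by
  rw [spectrum.mem_iff, Algebra.algebraMap_eq_smul_one, isUnit_iff_isUnit_det,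
    isUnit_iff_ne_zero, not_not, ← exists_mulVec_eq_zero_iff]
  refine exists_congr fun v => and_congr_right fun _ => ?_
  rw [sub_mulVec, smul_mulVec, one_mulVec, sub_eq_zero, eq_comm,
    RCLike.real_smul_eq_coe_smul (K := ℂ)]
  rfl

section lamMax

variable {n : ℕ} {A : Matrix (Fin n) (Fin n) ℂ}

theorem lamMax_eq_sSup_spectrum (A : Matrix (Fin n) (Fin n) ℂ) :
    lamMax A = sSup (spectrum ℝ A) := by
  rw [lamMax]
  congr 1
  ext t
  exact (mem_spectrum_real_iff_exists_mulVec_eq_smul A t).symm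

theorem IsHermitian.le_lamMax (hA : A.IsHermitian) {t : ℝ} (ht : t ∈ spectrum ℝ A) :
    t ≤ lamMax A := by
  rw [lamMax_eq_sSup_spectrum]
  exact le_csSup (hA.spectrum_real_eq_range_eigenvalues ▸ (Set.finite_range _).bddAbove) ht

theorem IsHermitian.posSemidef_lamMax_smul_one_sub (hA : A.IsHermitian) :
    ((lamMax A : ℂ) • 1 - A).PosSemidef := by
  have := le_algebraMap_of_spectrum_le (fun _ ht => hA.le_lamMax ht) hA.isSelfAdjoint
  rwa [Algebra.algebraMap_eq_smul_one, le_iff, RCLike.real_smul_eq_coe_smul (K := ℂ)] at this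

theorem IsHermitian.re_dotProduct_mulVec_le (hA : A.IsHermitian) (x : Fin n → ℂ) :
    (star x ⬝ᵥ A *ᵥ x).re ≤ lamMax A * (star x ⬝ᵥ x).re := by
  have := Complex.nonneg_iff.mp (hA.posSemidef_lamMax_smul_one_sub.dotProduct_mulVec_nonneg x)
  simpa [sub_mulVec, smul_mulVec, dotProduct_sub] using this.1

theorem IsHermitian.lamMax_pos (hA : A.IsHermitian) {x : Fin n → ℂ}
    (hx : 0 < (star x ⬝ᵥ A *ᵥ x).re) : 0 < lamMax A := by
  have hxx : 0 ≤ (star x ⬝ᵥ x).re := by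
    simpa using (Complex.nonneg_iff.mp (PosSemidef.one.dotProduct_mulVec_nonneg x)).1
  have := hA.re_dotProduct_mulVec_le x
  by_contra! h
  nlinarith [mul_nonpos_of_nonpos_of_nonneg h hxx]

theorem IsHermitian.re_trace_mul_le (hA : A.IsHermitian) {Q : Matrix (Fin n) (Fin n) ℂ}
    (hQ : Q.PosSemidef) : (Q * A).trace.re ≤ Q.trace.re * lamMax A := by
  have := Complex.nonneg_iff.mp (hQ.trace_mul_nonneg hA.posSemidef_lamMax_smul_one_sub)
  simpa [Matrix.mul_sub, trace_sub, mul_comm] using this.1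

end lamMax

end Matrix

/-- For Hermitian PSD matrices `S_R, S_E` with `S_R − S_E` having a
positive eigenvalue, and every Hermitian PSD `Q`: the matrices `I + Q S_R` and
`I + Q S_E` are invertible, `Θ(Q) = S_R(I + Q S_R)⁻¹ − S_E(I + Q S_E)⁻¹` is
Hermitian with `λ_max(Θ(Q)) > 0`, `Tr(Q Θ(Q)) ≤ Tr(Q) λ_max(Θ(Q))`, and in
particular `Tr(Q) = 1` implies `Tr(Q Θ(Q)) ≤ λ_max(Θ(Q))`. -/
theorem stmt_8 (nT : ℕ) (SR SE : Matrix (Fin nT) (Fin nT) ℂ)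
    (hSR : SR.PosSemidef) (hSE : SE.PosSemidef)
    (hpos : ∃ (t : ℝ) (v : Fin nT → ℂ), 0 < t ∧ v ≠ 0 ∧ (SR - SE) *ᵥ v = (t : ℂ) • v)
    (Q : Matrix (Fin nT) (Fin nT) ℂ) (hQ : Q.PosSemidef) :
    IsUnit (1 + Q * SR) ∧ IsUnit (1 + Q * SE) ∧
    (SR * (1 + Q * SR)⁻¹ - SE * (1 + Q * SE)⁻¹).IsHermitian ∧
    0 < lamMax (SR * (1 + Q * SR)⁻¹ - SE * (1 + Q * SE)⁻¹) ∧
    (Q * (SR * (1 + Q * SR)⁻¹ - SE * (1 + Q * SE)⁻¹)).trace.re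
      ≤ Q.trace.re * lamMax (SR * (1 + Q * SR)⁻¹ - SE * (1 + Q * SE)⁻¹) ∧
    (Q.trace = 1 →
      (Q * (SR * (1 + Q * SR)⁻¹ - SE * (1 + Q * SE)⁻¹)).trace.re
        ≤ lamMax (SR * (1 + Q * SR)⁻¹ - SE * (1 + Q * SE)⁻¹)) := by
  obtain ⟨t, v, ht, hv, hv_eig⟩ := hpos
  have hR := hQ.isUnit_one_add_mul hSR
  have hE := hQ.isUnit_one_add_mul hSE
  have hΘ : (SR * (1 + Q * SR)⁻¹ - SE * (1 + Q * SE)⁻¹).IsHermitian :=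
    (hSR.1.mul_inv_one_add_mul hQ.1).sub (hSE.1.mul_inv_one_add_mul hQ.1)
  have hform : 0 < (star ((1 + Q * SR) *ᵥ v) ⬝ᵥ
      (SR * (1 + Q * SR)⁻¹ - SE * (1 + Q * SE)⁻¹) *ᵥ ((1 + Q * SR) *ᵥ v)).re := by
    rw [star_mulVec, ← dotProduct_mulVec, mulVec_mulVec, mulVec_mulVec,
      conjTranspose_one_add_mul hSR.1 hQ.1,
      one_add_mul_mul_sub_mul_one_add_mul hR (hSE.isUnit_one_add_mul hQ)]
    exact (hSR.1.sub hSE.1).re_dotProduct_add_mul_mul_mulVec_pos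
      (hQ.mul_inv_one_add_mul hSE) ht hv hv_eig
  have htrace := hΘ.re_trace_mul_le hQ
  exact ⟨hR, hE, hΘ, hΘ.lamMax_pos hform, htrace, fun h => by simpa [h] using htrace⟩
end

section
/- Assume S_R − S_E has a positive eigenvalue but is not positive definite. Then every Q ∈ Ω satisfying Q Θ(Q) = Tr(Q Θ(Q)) · Q and λ_max(Θ(Q)) = Tr(Q Θ(Q)) (in particular, every global maximizer of the secrecy rate over Ω) has rank strictly less than n_T. -/
open Matrix
open scoped ComplexOrder

namespace Matrix

variable {n 𝕜 : Type*} [Fintype n] [RCLike 𝕜] {Q A B P₁ P₂ H : Matrix n n 𝕜}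

theorem PosSemidef.nonneg_of_mulVec_eq_smul (hA : A.PosSemidef) {v : n → 𝕜}
    (hv : v ≠ 0) {t : ℝ} (h : A *ᵥ v = (t : 𝕜) • v) : 0 ≤ t := by
  have hform : star v ⬝ᵥ A *ᵥ v = t * (star v ⬝ᵥ v) := by
    rw [h, dotProduct_smul, smul_eq_mul]
  have hvv : 0 < star v ⬝ᵥ v := dotProduct_star_self_pos_iff.mpr hv
  have hnonneg := mul_nonneg (hA.dotProduct_mulVec_nonneg v) (inv_pos.mpr hvv).le
  rwa [hform, mul_inv_cancel_right₀ hvv.ne', RCLike.ofReal_nonneg] at hnonneg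

theorem PosDef.add_mul_mul_self (hQ : Q.PosDef) (hA : A.PosSemidef) : (Q + Q * A * Q).PosDef :=
  hQ.add_posSemidef (by simpa [hQ.1.eq] using hA.conjTranspose_mul_mul_same Q)

variable [DecidableEq n]

theorem isUnit_of_rank_eq_card {K : Type*} [Field K] {A : Matrix n n K}
    (h : A.rank = Fintype.card n) : IsUnit A := by
  rw [← mulVec_surjective_iff_isUnit]
  have hrange : LinearMap.range A.mulVecLin = ⊤ :=
    Submodule.eq_top_of_finrank_eq (by rwa [Module.finrank_fintype_fun_eq_card])
  exact LinearMap.range_eq_top.mp hrange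

theorem one_add_mul_mul_sub_mul_inv_mul_one_add {R : Type*} [CommRing R] {Q A B : Matrix n n R}
    (hA : IsUnit (1 + Q * A)) (hB : IsUnit (1 + Q * B)) :
    (1 + A * Q) * (A * (1 + Q * A)⁻¹ - B * (1 + Q * B)⁻¹) * (1 + Q * B) = A - B := by
  have hA' : (1 + A * Q) * (A * (1 + Q * A)⁻¹) = A := by
    rw [← Matrix.mul_assoc, show (1 + A * Q) * A = A * (1 + Q * A) by noncomm_ring,
      Matrix.mul_assoc, mul_nonsing_inv _ ((isUnit_iff_isUnit_det _).mp hA), Matrix.mul_one]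
  have hB' : B * (1 + Q * B)⁻¹ * (1 + Q * B) = B := by
    rw [Matrix.mul_assoc, nonsing_inv_mul _ ((isUnit_iff_isUnit_det _).mp hB), Matrix.mul_one]
  rw [Matrix.mul_sub, Matrix.sub_mul, hA', Matrix.mul_assoc, hB']
  noncomm_ring

namespace PosDef

theorem isUnit_one_add_mul (hQ : Q.PosDef) (hA : A.PosSemidef) : IsUnit (1 + Q * A) := by
  have : 1 + Q * A = Q * (Q⁻¹ + A) := by
    rw [Matrix.mul_add, mul_nonsing_inv _ ((isUnit_iff_isUnit_det _).mp hQ.isUnit)]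
  rw [this]
  exact hQ.isUnit.mul (hQ.inv.add_posSemidef hA).isUnit

theorem mul_sub_mul_eq_smul_mul (hQ : Q.PosDef) (hA : A.PosSemidef) (hB : B.PosSemidef) {c : 𝕜}
    (h : A * (1 + Q * A)⁻¹ - B * (1 + Q * B)⁻¹ = c • 1) :
    Q * (A - B) * Q = c • ((Q + Q * A * Q) * (Q + Q * B * Q)) := by
  rw [← one_add_mul_mul_sub_mul_inv_mul_one_add (hQ.isUnit_one_add_mul hA)
    (hQ.isUnit_one_add_mul hB), h]
  simp only [Matrix.mul_smul, Matrix.smul_mul, Matrix.mul_one]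
  congr 1
  noncomm_ring

end PosDef

theorem IsHermitian.exists_eigenvalues_eq_mul_of_eq_smul_mul (hH : H.IsHermitian)
    (hP₁ : P₁.PosDef) (hP₂ : P₂.PosDef) {c : 𝕜} (h : H = c • (P₁ * P₂)) (i : n) :
    ∃ r : ℝ, 0 < r ∧ (hH.eigenvalues i : 𝕜) = c * r := by
  set w : n → 𝕜 := (hH.eigenvectorBasis i).ofLp
  have hw : w ≠ 0 := fun h0 =>
    hH.eigenvectorBasis.orthonormal.ne_zero i (by simpa [w] using congrArg (WithLp.toLp 2) h0)
  have hHw : H *ᵥ w = (hH.eigenvalues i : 𝕜) • w := by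
    rw [hH.mulVec_eigenvectorBasis i, RCLike.real_smul_eq_coe_smul (K := 𝕜)]
  have hP₂w : P₂ *ᵥ w ≠ 0 := fun h0 =>
    hw (mulVec_injective_of_isUnit hP₂.isUnit (by rw [h0, mulVec_zero]))
  have ha := hP₂.dotProduct_mulVec_pos hw
  obtain ⟨r, hr, hr_eq⟩ :=
    RCLike.pos_iff_exists_ofReal.mp (div_pos (hP₁.dotProduct_mulVec_pos hP₂w) ha)
  refine ⟨r, hr, ?_⟩
  rw [hr_eq, ← mul_div_assoc, eq_div_iff ha.ne']
  calc (hH.eigenvalues i : 𝕜) * (star w ⬝ᵥ P₂ *ᵥ w) = star w ⬝ᵥ P₂ *ᵥ (H *ᵥ w) := by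
        rw [hHw, mulVec_smul, dotProduct_smul, smul_eq_mul]
    _ = c * (star (P₂ *ᵥ w) ⬝ᵥ P₁ *ᵥ P₂ *ᵥ w) := by
        rw [h, smul_mulVec, mulVec_smul, dotProduct_smul, smul_eq_mul, ← mulVec_mulVec,
          dotProduct_mulVec, star_mulVec, hP₂.isHermitian.eq]

theorem IsHermitian.posDef_of_eq_smul_mul (hH : H.IsHermitian) (hP₁ : P₁.PosDef)
    (hP₂ : P₂.PosDef) {γ : ℝ} (hγ : 0 < γ) (h : H = (γ : 𝕜) • (P₁ * P₂)) : H.PosDef := by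
  refine hH.posDef_iff_eigenvalues_pos.mpr fun i => ?_
  obtain ⟨r, hr, hi⟩ := hH.exists_eigenvalues_eq_mul_of_eq_smul_mul hP₁ hP₂ h i
  rw [← RCLike.ofReal_mul, RCLike.ofReal_inj] at hi
  rw [hi]
  exact mul_pos hγ hr

theorem IsHermitian.posSemidef_of_eq_smul_mul (hH : H.IsHermitian) (hP₁ : P₁.PosDef)
    (hP₂ : P₂.PosDef) {γ : ℝ} (hγ : 0 ≤ γ) (h : H = (γ : 𝕜) • (P₁ * P₂)) : H.PosSemidef := by
  refine hH.posSemidef_iff_eigenvalues_nonneg.mpr fun i => ?_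
  obtain ⟨r, hr, hi⟩ := hH.exists_eigenvalues_eq_mul_of_eq_smul_mul hP₁ hP₂ h i
  rw [← RCLike.ofReal_mul, RCLike.ofReal_inj] at hi
  rw [hi]
  exact mul_nonneg hγ hr.le

theorem IsHermitian.posDef_or_posSemidef_neg_of_eq_smul_mul [Nonempty n] (hH : H.IsHermitian)
    (hP₁ : P₁.PosDef) (hP₂ : P₂.PosDef) {c : 𝕜} (h : H = c • (P₁ * P₂)) :
    H.PosDef ∨ (-H).PosSemidef := by
  obtain ⟨r, hr, hi⟩ :=
    hH.exists_eigenvalues_eq_mul_of_eq_smul_mul hP₁ hP₂ h (Classical.arbitrary n)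
  set γ := hH.eigenvalues (Classical.arbitrary n) / r
  have hc : c = γ := by
    rw [RCLike.ofReal_div, hi, mul_div_cancel_right₀ _ (RCLike.ofReal_ne_zero.mpr hr.ne')]
  rcases lt_or_ge 0 γ with hγ | hγ
  · exact .inl (hH.posDef_of_eq_smul_mul hP₁ hP₂ hγ (hc ▸ h))
  · refine .inr (hH.neg.posSemidef_of_eq_smul_mul hP₁ hP₂ (neg_nonneg.mpr hγ) ?_)
    rw [h, hc, RCLike.ofReal_neg, neg_smul]

end Matrix

theorem stmt_12_general (nT nR nE : ℕ) (HR : Matrix (Fin nR) (Fin nT) ℂ)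
    (HE : Matrix (Fin nE) (Fin nT) ℂ) (ρ : ℝ) (hρ : 0 < ρ)
    (SR SE Θ : Matrix (Fin nT) (Fin nT) ℂ)
    (hSR : SR = (ρ : ℂ) • (HRᴴ * HR)) (hSE : SE = (ρ : ℂ) • (HEᴴ * HE))
    (hpos : ∃ (t : ℝ) (v : Fin nT → ℂ), 0 < t ∧ v ≠ 0 ∧
      (SR - SE) *ᵥ v = (t : ℂ) • v)
    (hnpd : ¬ (SR - SE).PosDef)
    (Q : Matrix (Fin nT) (Fin nT) ℂ) (hQ : Q.PosSemidef)
    (hΘ : Θ = SR * (1 + Q * SR)⁻¹ - SE * (1 + Q * SE)⁻¹)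
    (heq1 : Q * Θ = (Q * Θ).trace • Q) :
    Q.rank < nT := by
  obtain ⟨t, v, ht, hv, hvt⟩ := hpos
  obtain ⟨j, -⟩ := Function.ne_iff.mp hv
  have : Nonempty (Fin nT) := ⟨j⟩
  by_contra! hrank
  have hQu : IsUnit Q :=
    isUnit_of_rank_eq_card (le_antisymm (rank_le_card_width Q) (by simpa using hrank))
  have hQpd : Q.PosDef := hQ.posDef_iff_isUnit.mpr hQu
  have hρ' : (0 : ℂ) ≤ ρ := Complex.zero_le_real.mpr hρ.le
  have hSR' : SR.PosSemidef := hSR ▸ (posSemidef_conjTranspose_mul_self HR).smul hρ'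
  have hSE' : SE.PosSemidef := hSE ▸ (posSemidef_conjTranspose_mul_self HE).smul hρ'
  have hΘc : Θ = (Q * Θ).trace • 1 :=
    hQu.mul_left_cancel (heq1.trans (by rw [Matrix.mul_smul, Matrix.mul_one]))
  have hH : (star Q * (SR - SE) * Q).IsHermitian :=
    isHermitian_conjTranspose_mul_mul Q (hSR'.1.sub hSE'.1)
  rw [hQ.1.star_eq] at hH
  rcases hH.posDef_or_posSemidef_neg_of_eq_smul_mul (hQpd.add_mul_mul_self hSR')
    (hQpd.add_mul_mul_self hSE') (hQpd.mul_sub_mul_eq_smul_mul hSR' hSE' (hΘ ▸ hΘc))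
    with hpd | hpsd
  · exact hnpd ((hQu.posDef_star_left_conjugate_iff).mp (by rwa [hQ.1.star_eq]))
  · have hneg : (-(SR - SE)).PosSemidef := (hQu.posSemidef_star_left_conjugate_iff).mp
      (by rwa [hQ.1.star_eq, Matrix.mul_neg, Matrix.neg_mul])
    have hvt' : (-(SR - SE)) *ᵥ v = ((-t : ℝ) : ℂ) • v := by
      rw [neg_mulVec, hvt, Complex.ofReal_neg, neg_smul]
    linarith [hneg.nonneg_of_mulVec_eq_smul (t := -t) hv hvt']

/-- If `S_R − S_E` has a positive eigenvalue but is not positive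
definite, then every `Q ∈ Ω` satisfying the optimality equations
`Q Θ(Q) = Tr(Q Θ(Q)) Q`, `λ_max(Θ(Q)) = Tr(Q Θ(Q))` has rank strictly less
than `n_T`. -/
theorem stmt_12 (nT nR nE : ℕ) (HR : Matrix (Fin nR) (Fin nT) ℂ)
    (HE : Matrix (Fin nE) (Fin nT) ℂ) (ρ : ℝ) (hρ : 0 < ρ)
    (SR SE Θ : Matrix (Fin nT) (Fin nT) ℂ)
    (hSR : SR = (ρ : ℂ) • (HRᴴ * HR)) (hSE : SE = (ρ : ℂ) • (HEᴴ * HE))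
    (hpos : ∃ (t : ℝ) (v : Fin nT → ℂ), 0 < t ∧ v ≠ 0 ∧
      (SR - SE) *ᵥ v = (t : ℂ) • v)
    (hnpd : ¬ (SR - SE).PosDef)
    (Q : Matrix (Fin nT) (Fin nT) ℂ) (hQ : Q.PosSemidef) (htr : Q.trace = 1)
    (hΘ : Θ = SR * (1 + Q * SR)⁻¹ - SE * (1 + Q * SE)⁻¹)
    (heq1 : Q * Θ = (Q * Θ).trace • Q)
    (heq2 : lamMax Θ = (Q * Θ).trace.re) :
    Q.rank < nT :=
  stmt_12_general nT nR nE HR HE ρ hρ SR SE Θ hSR hSE hpos hnpd Q hQ hΘ heq1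
end
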